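/- arXiv:2005.00148 — 9 statements merged into one kernel-verified Lean document; each statement's English description precedes it below -/
import Mathlib

section
/- Let X₁ and X₂ be compact metric spaces, Y₂ a closed subset of X₂, n ≥ 1, and τ : Y₂ → X₁ a map such that for every continuous function f : X₁ → Mₙ(ℂ) the map y ↦ f(τ(y)) is continuous on Y₂. Then there exists a compact metrizable topological space Z such that the pullback algebra P := {(f, g) ∈ C(X₁, Mₙ(ℂ)) × C(X₂, Mₙ(ℂ)) : g(y) = f(τ(y)) for all y ∈ Y₂} is isomorphic, as a unital star-algebra over ℂ, to C(Z, Mₙ(ℂ)). -/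
/-!
The space `Z` is the adjunction space `X₁ ∪_τ X₂`, the quotient of `X₁ ⊕ X₂` identifying each
`y ∈ Y₂` with `τ y`. Continuous maps out of it, with values in any space, are exactly the pairs
that agree along `τ`; for values in `Mₙ(ℂ)` this is the star-algebra isomorphism with `P`.
It is compact as a quotient of a compact space. For metrizability, the Tietze extension theorem
and the fact that closed subsets of metric spaces are zero sets show that each point of `Z` is
the zero set of a compatible pair of real functions. Compatible pairs therefore separate points,
and since `C(X₁, ℝ) × C(X₂, ℝ)` is separable, a countable dense family of them maps `Z`
injectively, hence as a closed embedding, into `ℝ^ℕ`.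
-/

open TopologicalSpace

theorem IsClosed.exists_continuous_nonneg_eq_zero_iff {X : Type*} [TopologicalSpace X]
    [PerfectlyNormalSpace X] {s : Set X} (hs : IsClosed s) :
    ∃ f : C(X, ℝ), (∀ x, 0 ≤ f x) ∧ ∀ x, f x = 0 ↔ x ∈ s := by
  obtain ⟨f, hfs, hf⟩ := perfectlyNormalSpace_iff_forall_isClosed_preimage_zero.mp ‹_› s hs
  exact ⟨f, fun x => (hf x).1, fun x => by rw [hfs]; rfl⟩

theorem metrizableSpace_of_separatesPoints {Z V : Type*} [TopologicalSpace Z] [CompactSpace Z]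
    [TopologicalSpace V] [SeparableSpace V] (F : V → Z → ℝ) (hF : ∀ v, Continuous (F v))
    (hFz : ∀ z, Continuous fun v => F v z) (hsep : Pairwise fun z z' => ∃ v, F v z ≠ F v z') :
    MetrizableSpace Z := by
  obtain ⟨s, hs, hsd⟩ := exists_countable_dense V
  have := hs.to_subtype
  let e : Z → s → ℝ := fun z v => F v z
  have he : Function.Injective e := by
    intro z z' hzz'
    by_contra hne
    obtain ⟨v, hv⟩ := hsep hne
    exact hv (congrFun (Continuous.ext_on hsd (hFz z) (hFz z') fun v hv => congrFun hzz' ⟨v, hv⟩) v)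
  exact ((continuous_pi fun v : s => hF v).isClosedEmbedding he).isEmbedding.metrizableSpace

theorem continuous_comp_of_forall_matrix {X Y m : Type*} [TopologicalSpace X] [TopologicalSpace Y]
    [Fintype m] [DecidableEq m] [Nonempty m] {τ : Y → X}
    (hτ : ∀ f : C(X, Matrix m m ℂ), Continuous fun y => f (τ y)) (f : C(X, ℝ)) :
    Continuous fun y => f (τ y) := by
  let i : m := Classical.arbitrary m
  have := (hτ ⟨fun x => algebraMap ℝ (Matrix m m ℂ) (f x), by fun_prop⟩).matrix_elem i i
  simpa [Function.comp_def, Matrix.algebraMap_matrix_apply] using Complex.continuous_re.comp this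

noncomputable section

variable {X₁ X₂ : Type*} {Y : Set X₂}

open Classical in
def AdjunctionSpace.normalize (τ : Y → X₁) : X₁ ⊕ X₂ → X₁ ⊕ X₂ :=
  Sum.elim Sum.inl fun y => if h : y ∈ Y then Sum.inl (τ ⟨y, h⟩) else Sum.inr y

/-- The adjunction space `X₁ ∪_τ X₂`, obtained by attaching `X₂` to `X₁` along `τ`. -/
def AdjunctionSpace (τ : Y → X₁) : Type _ :=
  Quotient (Setoid.ker (AdjunctionSpace.normalize τ))

namespace AdjunctionSpace

variable (τ : Y → X₁)

@[simp]
theorem normalize_inl (x : X₁) : normalize τ (.inl x) = .inl x := rfl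

theorem normalize_inr_of_mem {y : X₂} (hy : y ∈ Y) : normalize τ (.inr y) = .inl (τ ⟨y, hy⟩) := by
  simp [normalize, hy]

theorem normalize_inr_of_notMem {y : X₂} (hy : y ∉ Y) : normalize τ (.inr y) = .inr y := by
  simp [normalize, hy]

theorem normalize_eq_inl_or (a : X₁ ⊕ X₂) :
    (∃ x, normalize τ a = .inl x) ∨ ∃ y ∉ Y, normalize τ a = .inr y := by
  rcases a with x | y
  · exact .inl ⟨x, rfl⟩
  · by_cases hy : y ∈ Y
    · exact .inl ⟨_, normalize_inr_of_mem τ hy⟩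
    · exact .inr ⟨y, hy, normalize_inr_of_notMem τ hy⟩

theorem elim_normalize {E : Type*} {f : X₁ → E} {g : X₂ → E} (hfg : ∀ y : Y, g y = f (τ y))
    (a : X₁ ⊕ X₂) : Sum.elim f g (normalize τ a) = Sum.elim f g a := by
  rcases a with x | y
  · rfl
  · by_cases hy : y ∈ Y
    · rw [normalize_inr_of_mem τ hy]
      exact (hfg ⟨y, hy⟩).symm
    · rw [normalize_inr_of_notMem τ hy]

def mk (a : X₁ ⊕ X₂) : AdjunctionSpace τ := Quotient.mk _ a

theorem mk_eq_mk_iff {a b : X₁ ⊕ X₂} : mk τ a = mk τ b ↔ normalize τ a = normalize τ b :=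
  Quotient.eq

variable {τ} in
theorem ind {p : AdjunctionSpace τ → Prop} (h : ∀ a, p (mk τ a)) (z : AdjunctionSpace τ) : p z :=
  Quotient.ind h z

variable [TopologicalSpace X₁] [TopologicalSpace X₂]

instance : TopologicalSpace (AdjunctionSpace τ) := by
  unfold AdjunctionSpace; infer_instance

instance [CompactSpace X₁] [CompactSpace X₂] : CompactSpace (AdjunctionSpace τ) := by
  unfold AdjunctionSpace; infer_instance

theorem continuous_mk : Continuous (mk τ) := continuous_quotient_mk'

def ι₁ : C(X₁, AdjunctionSpace τ) := ⟨fun x => mk τ (.inl x), (continuous_mk τ).comp continuous_inl⟩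

def ι₂ : C(X₂, AdjunctionSpace τ) := ⟨fun y => mk τ (.inr y), (continuous_mk τ).comp continuous_inr⟩

theorem ι₂_coe (y : Y) : ι₂ τ y = ι₁ τ (τ y) :=
  (mk_eq_mk_iff τ).2 (normalize_inr_of_mem τ y.2)

variable {τ} {E : Type*} [TopologicalSpace E]

def lift (f : C(X₁, E)) (g : C(X₂, E)) (hfg : ∀ y : Y, g y = f (τ y)) :
    C(AdjunctionSpace τ, E) where
  toFun := Quotient.lift (Sum.elim f g) fun a b hab => by
    rw [← elim_normalize τ hfg a, Setoid.ker_def.1 hab, elim_normalize τ hfg b]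
  continuous_toFun := (f.continuous.sumElim g.continuous).quotient_lift _

@[simp]
theorem lift_mk (f : C(X₁, E)) (g : C(X₂, E)) (hfg : ∀ y : Y, g y = f (τ y)) (a : X₁ ⊕ X₂) :
    lift f g hfg (mk τ a) = Sum.elim f g a := rfl

theorem hom_ext {h h' : C(AdjunctionSpace τ, E)} (h₁ : h.comp (ι₁ τ) = h'.comp (ι₁ τ))
    (h₂ : h.comp (ι₂ τ) = h'.comp (ι₂ τ)) : h = h' := by
  ext z
  induction z using ind with
  | h a =>
    rcases a with x | y
    · exact congr($h₁ x)
    · exact congr($h₂ y)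

section Separation

variable [PerfectlyNormalSpace X₂] (hY : IsClosed Y)
include hY

theorem exists_elim_eq_zero_iff_inl [PerfectlyNormalSpace X₁] [T1Space X₁]
    (hτ : ∀ f : C(X₁, ℝ), Continuous fun y => f (τ y)) (x : X₁) :
    ∃ (f : C(X₁, ℝ)) (g : C(X₂, ℝ)) (_ : ∀ y : Y, g y = f (τ y)),
      ∀ a, Sum.elim f g a = 0 ↔ normalize τ a = .inl x := by
  obtain ⟨f, hf_nonneg, hf⟩ := (isClosed_singleton (x := x)).exists_continuous_nonneg_eq_zero_iff
  obtain ⟨k, hk_nonneg, hk⟩ := hY.exists_continuous_nonneg_eq_zero_iff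
  obtain ⟨h, hh⟩ := ContinuousMap.exists_restrict_eq hY ⟨fun y => f (τ y), hτ f⟩
  have hh (y : Y) : h y = f (τ y) := congr($hh y)
  -- `k` vanishes exactly on `Y`, so `|h| + k` vanishes exactly where `h` does on `Y`.
  refine ⟨f, ⟨fun t => |h t| + k t, by fun_prop⟩, fun y => ?_, ?_⟩
  · simp [hh, abs_of_nonneg (hf_nonneg _), (hk y).2 y.2]
  rintro (x' | t)
  · simpa using hf x'
  · simp only [Sum.elim_inr, ContinuousMap.coe_mk]
    rw [add_eq_zero_iff_of_nonneg (abs_nonneg _) (hk_nonneg t), abs_eq_zero, hk]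
    by_cases ht : t ∈ Y
    · simpa [normalize_inr_of_mem τ ht, ht, hh ⟨t, ht⟩] using hf (τ ⟨t, ht⟩)
    · simp [normalize_inr_of_notMem τ ht, ht]

theorem exists_elim_eq_zero_iff_inr [T1Space X₂] {y : X₂} (hy : y ∉ Y) :
    ∃ (f : C(X₁, ℝ)) (g : C(X₂, ℝ)) (_ : ∀ y : Y, g y = f (τ y)),
      ∀ a, Sum.elim f g a = 0 ↔ normalize τ a = .inr y := by
  obtain ⟨d, hd_nonneg, hd⟩ := (isClosed_singleton (x := y)).exists_continuous_nonneg_eq_zero_iff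
  obtain ⟨k, hk_nonneg, hk⟩ := hY.exists_continuous_nonneg_eq_zero_iff
  have hdk (t : X₂) : d t + k t ≠ 0 := by
    rw [Ne, add_eq_zero_iff_of_nonneg (hd_nonneg t) (hk_nonneg t), hd, hk]
    rintro ⟨rfl, ht⟩
    exact hy ht
  -- `d / (d + k)` equals `1` on `Y` and vanishes only at `y`.
  refine ⟨1, ⟨fun t => d t / (d t + k t), by fun_prop (disch := exact hdk _)⟩, fun t => ?_, ?_⟩
  · have hdt : d t ≠ 0 := fun h => hy ((hd t).1 h ▸ t.2)
    simp [(hk t).2 t.2, hdt]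
  rintro (x | t)
  · simp
  · by_cases ht : t ∈ Y
    · have hty : t ≠ y := fun h => hy (h ▸ ht)
      simp [normalize_inr_of_mem τ ht, div_eq_zero_iff, hdk, hd, hty]
    · simp [normalize_inr_of_notMem τ ht, div_eq_zero_iff, hdk, hd]

theorem exists_lift_eq_zero_iff [PerfectlyNormalSpace X₁] [T1Space X₁] [T1Space X₂]
    (hτ : ∀ f : C(X₁, ℝ), Continuous fun y => f (τ y)) (z : AdjunctionSpace τ) :
    ∃ (f : C(X₁, ℝ)) (g : C(X₂, ℝ)) (hfg : ∀ y : Y, g y = f (τ y)),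
      ∀ z', lift f g hfg z' = 0 ↔ z' = z := by
  induction z using ind with | h b => ?_
  have key : ∃ (f : C(X₁, ℝ)) (g : C(X₂, ℝ)) (_ : ∀ y : Y, g y = f (τ y)),
      ∀ a, Sum.elim f g a = 0 ↔ normalize τ a = normalize τ b := by
    rcases normalize_eq_inl_or τ b with ⟨x, hx⟩ | ⟨y, hy, hyb⟩
    · exact hx ▸ exists_elim_eq_zero_iff_inl hY hτ x
    · exact hyb ▸ exists_elim_eq_zero_iff_inr hY hy
  obtain ⟨f, g, hfg, hzero⟩ := key
  refine ⟨f, g, hfg, ind fun a => ?_⟩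
  rw [lift_mk, mk_eq_mk_iff, hzero]

end Separation

theorem metrizableSpace [MetrizableSpace X₁] [CompactSpace X₁] [MetrizableSpace X₂]
    [CompactSpace X₂] (hY : IsClosed Y) (hτ : ∀ f : C(X₁, ℝ), Continuous fun y => f (τ y)) :
    MetrizableSpace (AdjunctionSpace τ) := by
  let V := {p : C(X₁, ℝ) × C(X₂, ℝ) // ∀ y : Y, p.2 y = p.1 (τ y)}
  refine metrizableSpace_of_separatesPoints (V := V) (fun p => lift p.1.1 p.1.2 p.2)
    (fun p => (lift _ _ p.2).continuous) (ind fun a => ?_) fun z z' hne => ?_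
  · rcases a with x | y
    · exact (continuous_eval_const x).comp (continuous_fst.comp continuous_subtype_val)
    · exact (continuous_eval_const y).comp (continuous_snd.comp continuous_subtype_val)
  · obtain ⟨f, g, hfg, hzero⟩ := exists_lift_eq_zero_iff hY hτ z
    refine ⟨⟨(f, g), hfg⟩, fun h => hne ((hzero z').1 ?_).symm⟩
    exact h ▸ (hzero z).2 rfl

section StarAlgEquiv

variable {R A : Type*} [CommSemiring R] [StarRing R] [TopologicalSpace A] [Semiring A]
  [IsTopologicalSemiring A] [StarRing A] [ContinuousStar A] [Algebra R A] [StarModule R A]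

def starAlgEquiv (P : StarSubalgebra R (C(X₁, A) × C(X₂, A)))
    (hP : ∀ p, p ∈ P ↔ ∀ y : Y, p.2 y = p.1 (τ y)) : C(AdjunctionSpace τ, A) ≃⋆ₐ[R] P :=
  let restrict : C(AdjunctionSpace τ, A) →⋆ₐ[R] C(X₁, A) × C(X₂, A) :=
    (ContinuousMap.compStarAlgHom' R A (ι₁ τ)).prod (ContinuousMap.compStarAlgHom' R A (ι₂ τ))
  have hmem (h : C(AdjunctionSpace τ, A)) : restrict h ∈ P :=
    (hP _).2 fun y => congr(h $(ι₂_coe τ y))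
  .ofBijective (restrict.codRestrict P hmem) <| by
    refine ⟨(StarAlgHom.injective_codRestrict _ _ _).2 fun h h' hh => ?_, ?_⟩
    · exact hom_ext congr($hh.1) congr($hh.2)
    · rintro ⟨⟨f, g⟩, hfg⟩
      exact ⟨lift f g ((hP _).1 hfg), rfl⟩

end StarAlgEquiv

end AdjunctionSpace

end

open AdjunctionSpace in
theorem stmt_0
    (n : ℕ) (hn : 1 ≤ n)
    (X₁ X₂ : Type) [MetricSpace X₁] [MetricSpace X₂]
    [CompactSpace X₁] [CompactSpace X₂]
    (Y₂ : Set X₂) (hY₂ : IsClosed Y₂)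
    (τ : Y₂ → X₁)
    (hτ : ∀ f : C(X₁, Matrix (Fin n) (Fin n) ℂ),
      Continuous fun y : Y₂ => f (τ y))
    (P : StarSubalgebra ℂ
      (C(X₁, Matrix (Fin n) (Fin n) ℂ) × C(X₂, Matrix (Fin n) (Fin n) ℂ)))
    (hP : ∀ p : C(X₁, Matrix (Fin n) (Fin n) ℂ) × C(X₂, Matrix (Fin n) (Fin n) ℂ),
      p ∈ P ↔ ∀ y : Y₂, p.2 (y : X₂) = p.1 (τ y)) :
    ∃ (Z : Type) (_ : TopologicalSpace Z) (_ : CompactSpace Z)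
      (_ : TopologicalSpace.MetrizableSpace Z),
      Nonempty (P ≃⋆ₐ[ℂ] C(Z, Matrix (Fin n) (Fin n) ℂ)) := by
  have : Nonempty (Fin n) := ⟨⟨0, hn⟩⟩
  exact ⟨AdjunctionSpace τ, inferInstance, inferInstance,
    metrizableSpace hY₂ (continuous_comp_of_forall_matrix hτ), ⟨(starAlgEquiv P hP).symm⟩⟩
end

section
/- Let X₁ and X₂ be compact metric spaces, Y₂ a closed subset of X₂, and τ : Y₂ → X₁ a continuous map. Define an equivalence relation on the disjoint union X₁ ⊔ X₂ by declaring two points equivalent if and only if they are equal, or one of them is a point y ∈ Y₂ ⊆ X₂ and the other is the point τ(y) ∈ X₁, or both are points y, y′ ∈ Y₂ ⊆ X₂ with τ(y) = τ(y′). Then the quotient space of X₁ ⊔ X₂ by this relation, equipped with the quotient topology, is Hausdorff. -/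
open Topology


/-- The gluing relation on the disjoint union `X₁ ⊕ X₂`: two points are related iff
they are equal, or one is a point `y ∈ Y₂ ⊆ X₂` and the other is `τ y ∈ X₁`, or both
are points `y, y' ∈ Y₂ ⊆ X₂` with `τ y = τ y'`. -/
def glueRel {X₁ X₂ : Type} (Y₂ : Set X₂) (τ : Y₂ → X₁) :
    (X₁ ⊕ X₂) → (X₁ ⊕ X₂) → Prop := fun a b =>
  a = b ∨
  (∃ y : Y₂, a = Sum.inr (y : X₂) ∧ b = Sum.inl (τ y)) ∨
  (∃ y : Y₂, b = Sum.inr (y : X₂) ∧ a = Sum.inl (τ y)) ∨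
  (∃ y y' : Y₂, a = Sum.inr (y : X₂) ∧ b = Sum.inr (y' : X₂) ∧ τ y = τ y')

lemma glueRel_equiv {X₁ X₂ : Type} (Y₂ : Set X₂) (τ : Y₂ → X₁) :
    Equivalence (glueRel Y₂ τ) := by
  constructor
  · intro a; exact Or.inl rfl
  · intro a b h
    unfold glueRel at *
    rcases h with h | ⟨y, h1, h2⟩ | ⟨y, h1, h2⟩ | ⟨y, y', h1, h2, h3⟩
    · exact Or.inl h.symm
    · exact Or.inr (Or.inr (Or.inl ⟨y, h1, h2⟩))
    · exact Or.inr (Or.inl ⟨y, h1, h2⟩)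
    · exact Or.inr (Or.inr (Or.inr ⟨y', y, h2, h1, h3.symm⟩))
  · intro a b c hab hbc
    unfold glueRel at *
    rcases hab with h | ⟨y, h1, h2⟩ | ⟨y, h1, h2⟩ | ⟨y, y', h1, h2, h3⟩ <;>
      rcases hbc with g | ⟨z, g1, g2⟩ | ⟨z, g1, g2⟩ | ⟨z, z', g1, g2, g3⟩ <;>
      subst_vars <;>
      simp_all [Sum.inl.injEq, Sum.inr.injEq] <;>
      aesop

/-- The saturation of a closed set under the glue relation is closed. -/
lemma glue_saturation_closed {X₁ X₂ : Type} [MetricSpace X₁] [MetricSpace X₂]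
    [CompactSpace X₁] [CompactSpace X₂]
    (Y₂ : Set X₂) (hY₂ : IsClosed Y₂) (τ : Y₂ → X₁) (hτ : Continuous τ)
    (C : Set (X₁ ⊕ X₂)) (hC : IsClosed C) :
    IsClosed {a | ∃ b ∈ C, glueRel Y₂ τ a b} := by
  set C₁ : Set X₁ := Sum.inl ⁻¹' C with hC₁def
  set C₂ : Set X₂ := Sum.inr ⁻¹' C with hC₂def
  have hC₁ : IsClosed C₁ := hC.preimage continuous_inl
  have hC₂ : IsClosed C₂ := hC.preimage continuous_inr
  set A : Set X₁ := τ '' (Subtype.val ⁻¹' C₂) with hAdef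
  have hY₂c : CompactSpace Y₂ := isCompact_iff_compactSpace.mp (hY₂.isCompact)
  have hA : IsClosed A := by
    have : IsCompact (Subtype.val ⁻¹' C₂ : Set Y₂) :=
      (hC₂.preimage continuous_subtype_val).isCompact
    exact (this.image hτ).isClosed
  have hval : IsClosedMap (Subtype.val : Y₂ → X₂) := hY₂.isClosedEmbedding_subtypeVal.isClosedMap
  have key : {a | ∃ b ∈ C, glueRel Y₂ τ a b}
      = C ∪ (Sum.inl '' A) ∪ (Sum.inr '' (Subtype.val '' (τ ⁻¹' (C₁ ∪ A)))) := by
    ext a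
    constructor
    · rintro ⟨b, hb, h | ⟨y, h1, h2⟩ | ⟨y, h1, h2⟩ | ⟨y, y', h1, h2, h3⟩⟩
      · exact Or.inl (Or.inl (h ▸ hb))
      · -- a = inr y, b = inl (τ y) ∈ C, so τ y ∈ C₁
        subst h1 h2
        exact Or.inr ⟨_, ⟨y, Or.inl hb, rfl⟩, rfl⟩
      · -- b = inr y ∈ C, a = inl (τ y), so y ∈ C₂ and τ y ∈ A
        subst h1 h2
        exact Or.inl (Or.inr ⟨τ y, ⟨y, hb, rfl⟩, rfl⟩)
      · -- a = inr y, b = inr y' ∈ C, τ y = τ y' ∈ A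
        subst h1 h2
        exact Or.inr ⟨_, ⟨y, Or.inr (h3 ▸ ⟨y', hb, rfl⟩), rfl⟩, rfl⟩
    · rintro ((h | ⟨x, ⟨y, hy, rfl⟩, rfl⟩) | ⟨z, ⟨y, hy, rfl⟩, rfl⟩)
      · exact ⟨a, h, Or.inl rfl⟩
      · -- a = inl (τ y), y ∈ C₂
        exact ⟨Sum.inr y, hy, Or.inr (Or.inr (Or.inl ⟨y, rfl, rfl⟩))⟩
      · rcases hy with hy | ⟨y', hy', hyy'⟩
        · exact ⟨Sum.inl (τ y), hy, Or.inr (Or.inl ⟨y, rfl, rfl⟩)⟩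
        · exact ⟨Sum.inr y', hy', Or.inr (Or.inr (Or.inr ⟨y, y', rfl, rfl, hyy'.symm⟩))⟩
  rw [key]
  exact ((hC.union (Topology.IsClosedEmbedding.inl.isClosedMap _ hA)).union
    (Topology.IsClosedEmbedding.inr.isClosedMap _
      (hval _ ((hC₁.union hA).preimage hτ))))

theorem stmt_2 (X₁ X₂ : Type) [MetricSpace X₁] [MetricSpace X₂]
    [CompactSpace X₁] [CompactSpace X₂]
    (Y₂ : Set X₂) (hY₂ : IsClosed Y₂) (τ : Y₂ → X₁) (hτ : Continuous τ) :
    T2Space (Quot (glueRel Y₂ τ)) := by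
  set r := glueRel Y₂ τ with hr
  have hequiv := glueRel_equiv Y₂ τ
  set q : (X₁ ⊕ X₂) → Quot r := Quot.mk r with hq
  have hqm : Topology.IsQuotientMap q := isQuotientMap_quot_mk
  have hpre : ∀ C : Set (X₁ ⊕ X₂), q ⁻¹' (q '' C) = {a | ∃ b ∈ C, r a b} := by
    intro C
    ext a
    simp only [Set.mem_preimage, Set.mem_image, Set.mem_setOf_eq]
    constructor
    · rintro ⟨b, hb, hab⟩
      exact ⟨b, hb, hequiv.eqvGen_iff.mp (Quot.eq.mp hab.symm)⟩
    · rintro ⟨b, hb, hab⟩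
      exact ⟨b, hb, (Quot.sound hab).symm⟩
  have hclosed : IsClosedMap q := by
    intro C hC
    rw [← hqm.isClosed_preimage, hpre]
    exact glue_saturation_closed Y₂ hY₂ τ hτ C hC
  -- fibers are closed
  have hfiber : ∀ x : X₁ ⊕ X₂, IsClosed (q ⁻¹' {q x}) := by
    intro x
    have : q ⁻¹' {q x} = q ⁻¹' (q '' {x}) := by rw [Set.image_singleton]
    rw [this, hpre]
    exact glue_saturation_closed Y₂ hY₂ τ hτ {x} isClosed_singleton
  constructor
  intro a b hab
  obtain ⟨x, rfl⟩ := Quot.exists_rep a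
  obtain ⟨y, rfl⟩ := Quot.exists_rep b
  have hdis : Disjoint (q ⁻¹' {q x}) (q ⁻¹' {q y}) := by
    rw [Set.disjoint_left]
    rintro z hz hz'
    exact hab (hz.symm.trans hz')
  obtain ⟨U, V, hU, hV, hxU, hyV, hUV⟩ :=
    normal_separation (hfiber x) (hfiber y) hdis
  refine ⟨(q '' Uᶜ)ᶜ, (q '' Vᶜ)ᶜ, (hclosed _ hU.isClosed_compl).isOpen_compl,
    (hclosed _ hV.isClosed_compl).isOpen_compl, ?_, ?_, ?_⟩
  · rintro ⟨z, hz, hzx⟩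
    exact hz (hxU (by simpa [Set.mem_preimage] using hzx))
  · rintro ⟨z, hz, hzy⟩
    exact hz (hyV (by simpa [Set.mem_preimage] using hzy))
  · rw [Set.disjoint_left]
    rintro c hc hc'
    obtain ⟨w, rfl⟩ := Quot.exists_rep c
    have hwU : w ∈ U := by
      by_contra h
      exact hc ⟨w, h, rfl⟩
    have hwV : w ∈ V := by
      by_contra h
      exact hc' ⟨w, h, rfl⟩
    exact hUV.le_bot ⟨hwU, hwV⟩
end

section
/- Let A be a unital C*-algebra, X a compact metric space, Y ⊆ X closed, n ≥ 1, and φ : A → C(Y, Mₙ(ℂ)) a unital star-homomorphism. Set Y′ := Y \ int(Y) and X′ := X \ int(Y), where int(Y) is the interior of Y in X. Then the map (a, f) ↦ (a, f|_{X′}) is an isomorphism of unital star-algebras from the pullback {(a, f) ∈ A × C(X, Mₙ(ℂ)) : φ(a)(y) = f(y) for all y ∈ Y} onto the pullback {(a, g) ∈ A × C(X′, Mₙ(ℂ)) : φ(a)(y) = g(y) for all y ∈ Y′}. -/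
set_option maxHeartbeats 1000000
set_option synthInstance.maxHeartbeats 400000

instance matTietze (n : ℕ) : TietzeExtension (Matrix (Fin n) (Fin n) ℂ) :=
  inferInstanceAs (TietzeExtension (Fin n → Fin n → ℂ))

theorem stmt_3 (A : Type) [NormedRing A] [StarRing A] [CStarRing A]
    [NormedAlgebra ℂ A] [StarModule ℂ A] [CompleteSpace A]
    (X : Type) [MetricSpace X] [CompactSpace X]
    (Y : Set X) (hY : IsClosed Y) (n : ℕ) (hn : 1 ≤ n)
    (φ : A →⋆ₐ[ℂ] C(Y, Matrix (Fin n) (Fin n) ℂ))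
    (P₁ : StarSubalgebra ℂ (A × C(X, Matrix (Fin n) (Fin n) ℂ)))
    (hP₁ : ∀ p : A × C(X, Matrix (Fin n) (Fin n) ℂ),
      p ∈ P₁ ↔ ∀ y : Y, φ p.1 y = p.2 (y : X))
    (P₂ : StarSubalgebra ℂ
      (A × C(((interior Y)ᶜ : Set X), Matrix (Fin n) (Fin n) ℂ)))
    (hP₂ : ∀ p : A × C(((interior Y)ᶜ : Set X), Matrix (Fin n) (Fin n) ℂ),
      p ∈ P₂ ↔ ∀ (y : X) (hy : y ∈ Y \ interior Y),
        φ p.1 ⟨y, hy.1⟩ = p.2 ⟨y, hy.2⟩) :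
    ∃ e : P₁ ≃⋆ₐ[ℂ] P₂, ∀ p : P₁,
      (e p : A × C(((interior Y)ᶜ : Set X), Matrix (Fin n) (Fin n) ℂ)) =
        ((p : A × C(X, Matrix (Fin n) (Fin n) ℂ)).1,
          ContinuousMap.restrict ((interior Y)ᶜ : Set X)
            (p : A × C(X, Matrix (Fin n) (Fin n) ℂ)).2) := by
  classical
  set M := Matrix (Fin n) (Fin n) ℂ
  have hX' : IsClosed ((interior Y)ᶜ : Set X) := isOpen_interior.isClosed_compl
  have fwd_mem : ∀ p : A × C(X, M), p ∈ P₁ →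
      ((p.1, ContinuousMap.restrict ((interior Y)ᶜ : Set X) p.2) : A × C(_, M)) ∈ P₂ := by
    intro p hp
    rw [hP₂]
    intro y hy
    rw [ContinuousMap.restrict_apply]
    exact (hP₁ p).mp hp ⟨y, hy.1⟩
  let Φ : P₁ →⋆ₐ[ℂ] P₂ :=
    { toFun := fun p => ⟨((p : A × C(X, M)).1,
        ContinuousMap.restrict ((interior Y)ᶜ : Set X) (p : A × C(X, M)).2),
        fwd_mem _ p.2⟩
      map_one' := rfl
      map_mul' := fun _ _ => rfl
      map_zero' := rfl
      map_add' := fun _ _ => rfl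
      commutes' := fun _ => rfl
      map_star' := fun _ => rfl }
  have hinj : Function.Injective Φ := by
    intro p q h
    have h' : (((p : A × C(X, M)).1,
        ContinuousMap.restrict ((interior Y)ᶜ : Set X) (p : A × C(X, M)).2) : A × C(_, M)) =
        (((q : A × C(X, M)).1,
        ContinuousMap.restrict ((interior Y)ᶜ : Set X) (q : A × C(X, M)).2) : A × C(_, M)) :=
      congrArg Subtype.val h
    obtain ⟨h1, h2⟩ := Prod.mk.inj h'
    apply Subtype.ext
    refine Prod.ext_iff.mpr ⟨h1, ?_⟩
    refine ContinuousMap.ext fun x => ?_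
    by_cases hx : x ∈ Y
    · have hp := (hP₁ _).mp p.2 ⟨x, hx⟩
      have hq := (hP₁ _).mp q.2 ⟨x, hx⟩
      rw [← hp, ← hq, h1]
    · have hx' : x ∈ ((interior Y)ᶜ : Set X) := fun hmem => hx (interior_subset hmem)
      have := congrFun (congrArg DFunLike.coe h2) ⟨x, hx'⟩
      simpa using this
  have hsurj : Function.Surjective Φ := by
    rintro ⟨⟨a, g⟩, hq⟩
    obtain ⟨f₁, hf₁⟩ := (φ a).exists_restrict_eq hY
    obtain ⟨f₂, hf₂⟩ := g.exists_restrict_eq hX'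
    have hf₁' : ∀ (x : X) (hx : x ∈ Y), f₁ x = φ a ⟨x, hx⟩ := by
      intro x hx
      have := congrFun (congrArg DFunLike.coe hf₁) ⟨x, hx⟩
      simpa using this
    have hf₂' : ∀ (x : X) (hx : x ∈ ((interior Y)ᶜ : Set X)), f₂ x = g ⟨x, hx⟩ := by
      intro x hx
      have := congrFun (congrArg DFunLike.coe hf₂) ⟨x, hx⟩
      simpa using this
    have hagree : ∀ x ∈ frontier Y, f₁ x = f₂ x := by
      intro x hx
      have hxY : x ∈ Y := by
        have := hx.1
        rwa [hY.closure_eq] at this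
      have hxI : x ∉ interior Y := hx.2
      have hx' : x ∈ ((interior Y)ᶜ : Set X) := hxI
      rw [hf₁' x hxY, hf₂' x hx']
      exact (hP₂ (a, g)).mp hq x ⟨hxY, hxI⟩
    have hcont : Continuous (Y.piecewise f₁ f₂) :=
      Continuous.piecewise hagree f₁.continuous f₂.continuous
    set F : C(X, M) := ⟨Y.piecewise f₁ f₂, hcont⟩ with hF
    have hFmem : ((a, F) : A × C(X, M)) ∈ P₁ := by
      rw [hP₁]
      intro y
      show φ a y = Y.piecewise f₁ f₂ y
      rw [Set.piecewise_eq_of_mem _ _ _ y.2, hf₁' y y.2]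
    refine ⟨⟨(a, F), hFmem⟩, ?_⟩
    apply Subtype.ext
    show (((a : A), ContinuousMap.restrict ((interior Y)ᶜ : Set X) F) : A × C(_, M)) = (a, g)
    refine Prod.ext_iff.mpr ⟨rfl, ?_⟩
    refine ContinuousMap.ext fun x => ?_
    show Y.piecewise f₁ f₂ x = g x
    by_cases hx : (x : X) ∈ Y
    · rw [Set.piecewise_eq_of_mem _ _ _ hx, hf₁' x hx]
      have := (hP₂ (a, g)).mp hq x ⟨hx, x.2⟩
      simpa using this
    · rw [Set.piecewise_eq_of_notMem _ _ _ hx, hf₂' x x.2]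
  refine ⟨StarAlgEquiv.ofBijective Φ ⟨hinj, hsurj⟩, fun p => ?_⟩
  rfl
end

section
/- Let n, M, l ∈ ℕ with 1 ≤ l and l + M − 1 ≤ n. For each t = 1,…,M−1 let u_t : [0,1] → Mₙ(ℂ) satisfy: u_t(0) = Iₙ, u_t(1) = U[(l l+t)], and for every θ ∈ [0,1] the matrix u_t(θ) is unitary and agrees with the identity off {l, l+t}. Let ξ_l, ξ_{l+1}, …, ξ_{l+M−1} ∈ [0,1] and set U := u_1(ξ_{l+1})·u_2(ξ_{l+2})⋯u_{M−1}(ξ_{l+M−1}). Suppose D ∈ Mₙ(ℂ) has a zero cross at index l′ for every l ≤ l′ ≤ l + M − 1 with ξ_{l′} > 0. If at least one of ξ_l,…,ξ_{l+M−1} equals 1, then U·D·U* has a zero cross at index l. -/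
/-- `D` has a zero cross at index `k`: every entry in the `k`-th row and every entry
in the `k`-th column of `D` is `0`. -/
def hasZeroCross {n : ℕ} (D : Matrix (Fin n) (Fin n) ℂ) (k : Fin n) : Prop :=
  (∀ q : Fin n, D k q = 0) ∧ (∀ p : Fin n, D p k = 0)

/-- `u` agrees with the identity off `{i, j}`. -/
def agreesOffPair {n : ℕ} (u : Matrix (Fin n) (Fin n) ℂ) (i j : Fin n) : Prop :=
  ∀ p q : Fin n, ¬((p = i ∨ p = j) ∧ (q = i ∨ q = j)) →
    u p q = (1 : Matrix (Fin n) (Fin n) ℂ) p q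

/-- The permutation matrix `U[π]`, with `(p,q)`-entry equal to `1` if `p = π q`
and `0` otherwise. -/
def permMat {n : ℕ} (π : Equiv.Perm (Fin n)) : Matrix (Fin n) (Fin n) ℂ :=
  Matrix.of fun p q => if p = π q then 1 else 0

theorem stmt_6 (n M l : ℕ) (hM : 1 ≤ M) (hl : 1 ≤ l) (hln : l + M - 1 ≤ n)
    (u : ℕ → ℝ → Matrix (Fin n) (Fin n) ℂ)
    (hu0 : ∀ t (ht1 : 1 ≤ t) (ht2 : t ≤ M - 1), u t 0 = 1)
    (hu1 : ∀ t (ht1 : 1 ≤ t) (ht2 : t ≤ M - 1),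
      u t 1 = permMat (Equiv.swap (⟨l - 1, by omega⟩ : Fin n) ⟨l + t - 1, by omega⟩))
    (huU : ∀ t (ht1 : 1 ≤ t) (ht2 : t ≤ M - 1) (θ : ℝ), 0 ≤ θ → θ ≤ 1 →
      u t θ ∈ Matrix.unitaryGroup (Fin n) ℂ)
    (huA : ∀ t (ht1 : 1 ≤ t) (ht2 : t ≤ M - 1) (θ : ℝ), 0 ≤ θ → θ ≤ 1 →
      agreesOffPair (u t θ) ⟨l - 1, by omega⟩ ⟨l + t - 1, by omega⟩)
    (ξ : ℕ → ℝ)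
    (hξ : ∀ s, l ≤ s → s ≤ l + M - 1 → 0 ≤ ξ s ∧ ξ s ≤ 1)
    (D : Matrix (Fin n) (Fin n) ℂ)
    (hD : ∀ l' (h1 : l ≤ l') (h2 : l' ≤ l + M - 1), 0 < ξ l' →
      hasZeroCross D ⟨l' - 1, by omega⟩)
    (hone : ∃ s, l ≤ s ∧ s ≤ l + M - 1 ∧ ξ s = 1) :
    hasZeroCross
      ((((List.range (M - 1)).map fun t => u (t + 1) (ξ (l + t + 1))).prod) * D *
        star (((List.range (M - 1)).map fun t => u (t + 1) (ξ (l + t + 1))).prod))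
      ⟨l - 1, by omega⟩ := by
  have hkn : l - 1 < n := by omega
  set k : Fin n := ⟨l - 1, hkn⟩ with hkdef
  -- key structural lemma about row k of the partial products
  have key : ∀ m, m ≤ M - 1 → ∀ a : Fin n,
      (((List.range m).map fun t => u (t + 1) (ξ (l + t + 1))).prod) k a ≠ 0 →
      (a = k ∧ ∀ t, 1 ≤ t → t ≤ m → ξ (l + t) < 1) ∨
      (∃ t, 1 ≤ t ∧ t ≤ m ∧ 0 < ξ (l + t) ∧
        ∃ h : l + t - 1 < n, a = ⟨l + t - 1, h⟩) := by
    intro m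
    induction m with
    | zero =>
      intro _ a ha
      left
      simp only [List.range_zero, List.map_nil, List.prod_nil] at ha
      constructor
      · by_contra hne
        exact ha (Matrix.one_apply_ne' hne)
      · intro t ht1 ht2; omega
    | succ m ih =>
      intro hm a ha
      have hm' : m ≤ M - 1 := by omega
      rw [List.range_succ, List.map_append, List.prod_append, List.map_singleton,
        List.prod_singleton, Matrix.mul_apply] at ha
      obtain ⟨b, -, hb⟩ := Finset.exists_ne_zero_of_sum_ne_zero ha
      have hVb : (((List.range m).map fun t => u (t + 1) (ξ (l + t + 1))).prod) k b ≠ 0 :=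
        fun h => hb (by rw [h, zero_mul])
      have hw : u (m + 1) (ξ (l + m + 1)) b a ≠ 0 := fun h => hb (by rw [h, mul_zero])
      have hlm : l + m + 1 ≤ l + M - 1 := by omega
      have hξm := hξ (l + m + 1) (by omega) hlm
      have hAgree : agreesOffPair (u (m + 1) (ξ (l + m + 1)))
          ⟨l - 1, by omega⟩ ⟨l + (m + 1) - 1, by omega⟩ :=
        huA (m + 1) (by omega) (by omega) _ hξm.1 hξm.2
      have hjn : l + m < n := by omega
      have hj : (⟨l + (m + 1) - 1, by omega⟩ : Fin n) = ⟨l + m, hjn⟩ :=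
        Fin.mk_eq_mk.mpr (by omega)
      rw [hj] at hAgree
      have hkj : k ≠ (⟨l + m, hjn⟩ : Fin n) := by
        simp only [hkdef, ne_eq, Fin.mk.injEq]; omega
      rcases ih hm' b hVb with ⟨hbk, hlt⟩ | ⟨t, ht1, ht2, htpos, hbn, hbt⟩
      · -- b = k
        subst hbk
        -- a is k or ⟨l+m⟩
        by_cases hak : a = k
        · -- a = k : diagonal entry nonzero forces ξ (l+m+1) ≠ 1
          subst hak
          left
          refine ⟨rfl, fun t ht1 ht2 => ?_⟩
          rcases Nat.lt_or_ge t (m + 1) with h | h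
          · exact hlt t ht1 (by omega)
          · have ht : t = m + 1 := by omega
            subst ht
            rcases lt_or_eq_of_le hξm.2 with h1 | h1
            · exact h1
            · exfalso
              apply hw
              rw [h1, hu1 (m + 1) (by omega) (by omega)]
              simp only [permMat, Matrix.of_apply]
              rw [if_neg]
              intro hcon
              have h2 : (Equiv.swap (⟨l - 1, by omega⟩ : Fin n)
                  ⟨l + (m + 1) - 1, by omega⟩) k = ⟨l + (m + 1) - 1, by omega⟩ :=
                Equiv.swap_apply_left _ _
              rw [h2, hj] at hcon
              exact hkj hcon
        · by_cases haj : a = ⟨l + m, hjn⟩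
          · -- a = ⟨l+m⟩ : nonzero off-diagonal forces ξ > 0
            subst haj
            right
            refine ⟨m + 1, by omega, le_refl _, ?_, hjn, by ext; omega⟩
            rcases lt_or_eq_of_le hξm.1 with h1 | h1
            · exact h1
            · exfalso
              apply hw
              rw [← h1, hu0 (m + 1) (by omega) (by omega)]
              exact Matrix.one_apply_ne hkj
          · exfalso
            apply hw
            rw [hAgree k a (by
                intro hcon
                rcases hcon.2 with h | h
                · exact hak h
                · exact haj h)]
            exact Matrix.one_apply_ne (Ne.symm hak)
      · -- b = ⟨l+t-1⟩  with 1 ≤ t ≤ m ; row b of w is an identity row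
        have hbk : b ≠ (⟨l - 1, by omega⟩ : Fin n) := by
          subst hbt; simp only [ne_eq, Fin.mk.injEq]; omega
        have hbj : b ≠ (⟨l + m, hjn⟩ : Fin n) := by
          subst hbt; simp only [ne_eq, Fin.mk.injEq]; omega
        have : u (m + 1) (ξ (l + m + 1)) b a = (1 : Matrix (Fin n) (Fin n) ℂ) b a :=
          hAgree b a (by intro hcon; rcases hcon.1 with h | h; exacts [hbk h, hbj h])
        rw [this] at hw
        have hab : a = b := by
          by_contra hne
          exact hw (Matrix.one_apply_ne (Ne.symm hne))
        right
        exact ⟨t, ht1, by omega, htpos, hbn, hab.trans hbt⟩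
  -- Main claim: nonzero entries of row k of the full product sit on zero crosses of D
  set V : Matrix (Fin n) (Fin n) ℂ :=
    ((List.range (M - 1)).map fun t => u (t + 1) (ξ (l + t + 1))).prod with hV
  have main : ∀ a : Fin n, V k a ≠ 0 → hasZeroCross D a := by
    intro a ha
    rcases key (M - 1) (le_refl _) a ha with ⟨hak, hlt⟩ | ⟨t, ht1, ht2, htpos, hbn, hbt⟩
    · subst hak
      obtain ⟨s, hs1, hs2, hs3⟩ := hone
      have hsl : s = l := by
        by_contra hne
        have : 1 ≤ s - l ∧ s - l ≤ M - 1 := by omega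
        have := hlt (s - l) this.1 this.2
        rw [show l + (s - l) = s by omega, hs3] at this
        exact absurd this (lt_irrefl 1)
      subst hsl
      have := hD s (le_refl _) (by omega) (by rw [hs3]; norm_num)
      convert this using 2
    · subst hbt
      have := hD (l + t) (by omega) (by omega) htpos
      convert this using 2
  -- assemble
  constructor
  · intro q
    rw [Matrix.mul_apply]
    apply Finset.sum_eq_zero
    intro b _
    rw [Matrix.mul_apply]
    rw [Finset.sum_mul]
    apply Finset.sum_eq_zero
    intro a _
    by_cases h : V k a = 0
    · rw [h, zero_mul, zero_mul]
    · rw [(main a h).1 b, mul_zero, zero_mul]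
  · intro p
    rw [Matrix.mul_apply]
    apply Finset.sum_eq_zero
    intro b _
    by_cases h : V k b = 0
    · have : (star V) b k = 0 := by
        simp [Matrix.star_apply, h]
      rw [this, mul_zero]
    · have : (V * D) p b = 0 := by
        rw [Matrix.mul_apply]
        apply Finset.sum_eq_zero
        intro a _
        rw [(main b h).2 a, mul_zero]
      rw [this, zero_mul]
end

section
/- Let n ≥ 1 and 1 ≤ j ≤ n, and let σ be the cyclic permutation (1 2 ⋯ j) of {1,…,n}, i.e. σ(k) = k+1 for 1 ≤ k < j, σ(j) = 1, and σ(k) = k for j < k ≤ n. If D ∈ Mₙ(ℂ) has a zero cross at index j, then 𝔯(U[σ]·D·U[σ]*) ≤ 𝔯(D). -/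
/-- The bandwidth `𝔯(D)` of a matrix: the least `m : ℕ` such that `D p q = 0`
whenever `|p - q| ≥ m`. -/
noncomputable def bandwidth {n : ℕ} (D : Matrix (Fin n) (Fin n) ℂ) : ℕ :=
  sInf {m : ℕ | ∀ p q : Fin n, m ≤ Nat.dist (p : ℕ) (q : ℕ) → D p q = 0}

/-- The permutation-type matrix `U[σ]` of a function `σ`, with `(p,q)`-entry equal
to `1` if `p = σ q` and `0` otherwise. -/
def permMatFun {n : ℕ} (σ : Fin n → Fin n) : Matrix (Fin n) (Fin n) ℂ :=
  Matrix.of fun p q => if p = σ q then 1 else 0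

lemma permMat_conj_apply {n : ℕ} (σ : Fin n → Fin n) (hbij : Function.Bijective σ)
    (D : Matrix (Fin n) (Fin n) ℂ) (p q : Fin n) :
    (permMatFun σ * D * star (permMatFun σ)) p q
      = D ((Equiv.ofBijective σ hbij).symm p) ((Equiv.ofBijective σ hbij).symm q) := by
  set e := Equiv.ofBijective σ hbij with he
  have hiff : ∀ (p a : Fin n), (p = σ a) ↔ (a = e.symm p) := by
    intro p a
    constructor
    · intro h; rw [h]; simp [he]
    · intro h; rw [h]
      exact (e.apply_symm_apply p).symm
  simp only [Matrix.mul_apply, permMatFun, Matrix.star_apply, Matrix.of_apply]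
  simp only [hiff]
  rw [Finset.sum_eq_single (e.symm q)]
  · simp only [if_pos rfl, star_one, mul_one]
    rw [Finset.sum_eq_single (e.symm p)] <;> simp +contextual
  · intro b _ hb
    simp [hb]
  · simp

theorem stmt_8 (n j : ℕ) (hn : 1 ≤ n) (hj1 : 1 ≤ j) (hjn : j ≤ n)
    (σ : Fin n → Fin n) (hbij : Function.Bijective σ)
    (hσ1 : ∀ k : Fin n, (k : ℕ) + 1 < j → (σ k : ℕ) = (k : ℕ) + 1)
    (hσ2 : (σ ⟨j - 1, by omega⟩ : ℕ) = 0)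
    (hσ3 : ∀ k : Fin n, j ≤ (k : ℕ) → σ k = k)
    (D : Matrix (Fin n) (Fin n) ℂ) (hD : hasZeroCross D ⟨j - 1, by omega⟩) :
    bandwidth (permMatFun σ * D * star (permMatFun σ)) ≤ bandwidth D := by
  set e := Equiv.ofBijective σ hbij with he
  set S : Set ℕ := {m : ℕ | ∀ p q : Fin n, m ≤ Nat.dist (p : ℕ) (q : ℕ) → D p q = 0} with hS
  have hSne : S.Nonempty := by
    refine ⟨n, fun p q h => ?_⟩
    exfalso
    have hp := p.isLt; have hq := q.isLt
    simp [Nat.dist] at h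
    omega
  have hmem : bandwidth D ∈ S := Nat.sInf_mem hSne
  apply Nat.sInf_le
  intro p q h
  rw [permMat_conj_apply σ hbij]
  set a := e.symm p with ha
  set b := e.symm q with hb
  by_cases haj : a = ⟨j - 1, by omega⟩
  · rw [haj]; exact hD.1 _
  by_cases hbj : b = ⟨j - 1, by omega⟩
  · rw [hbj]; exact hD.2 _
  have hpa : σ a = p := by rw [ha]; exact e.apply_symm_apply p
  have hqb : σ b = q := by rw [hb]; exact e.apply_symm_apply q
  have haj' : (a : ℕ) ≠ j - 1 := fun hc => haj (Fin.ext hc)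
  have hbj' : (b : ℕ) ≠ j - 1 := fun hc => hbj (Fin.ext hc)
  have hval : ∀ (k : Fin n), (k : ℕ) ≠ j - 1 →
      ((k : ℕ) + 1 < j ∧ (σ k : ℕ) = (k : ℕ) + 1) ∨ (j ≤ (k : ℕ) ∧ (σ k : ℕ) = (k : ℕ)) := by
    intro k hk
    rcases lt_or_ge (k : ℕ) j with hlt | hge
    · left; have : (k : ℕ) + 1 < j := by omega
      exact ⟨this, hσ1 k this⟩
    · right; exact ⟨hge, by rw [hσ3 k hge]⟩
  have hda := hval a haj'
  have hdb := hval b hbj'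
  apply hmem a b
  have hdist : Nat.dist (p : ℕ) (q : ℕ) ≤ Nat.dist (a : ℕ) (b : ℕ) := by
    rw [← hpa, ← hqb]
    simp only [Nat.dist]
    omega
  omega
end

section
/- Let n ≥ 2, let 1 ≤ a < n, and let u ∈ Mₙ(ℂ) agree with the identity off {a, a+1}. Then for every D ∈ Mₙ(ℂ), 𝔯(u·D·u*) ≤ 𝔯(D) + 1. -/
theorem stmt_10 (n a : ℕ) (hn : 2 ≤ n) (ha1 : 1 ≤ a) (han : a < n)
    (u : Matrix (Fin n) (Fin n) ℂ)
    (hu : agreesOffPair u ⟨a - 1, by omega⟩ ⟨a, by omega⟩)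
    (D : Matrix (Fin n) (Fin n) ℂ) :
    bandwidth (u * D * star u) ≤ bandwidth D + 1 := by
  have hdist : ∀ x y : ℕ, Nat.dist x y = x - y + (y - x) := fun x y => rfl
  have hkey : ∀ p r : Fin n, u p r ≠ 0 →
      (p : ℕ) = r ∨ (((p : ℕ) = a - 1 ∨ (p : ℕ) = a) ∧ ((r : ℕ) = a - 1 ∨ (r : ℕ) = a)) := by
    intro p r h
    by_cases hc : (p = (⟨a - 1, by omega⟩ : Fin n) ∨ p = (⟨a, by omega⟩ : Fin n)) ∧
        (r = (⟨a - 1, by omega⟩ : Fin n) ∨ r = (⟨a, by omega⟩ : Fin n))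
    · right
      simpa [Fin.ext_iff] using hc
    · left
      have h1 := hu p r hc
      rw [Matrix.one_apply] at h1
      by_contra hne
      have hpr : p ≠ r := fun he => hne (congrArg Fin.val he)
      rw [if_neg hpr] at h1
      exact h h1
  have hDmem : bandwidth D ∈
      {m : ℕ | ∀ p q : Fin n, m ≤ Nat.dist (p : ℕ) (q : ℕ) → D p q = 0} := by
    apply Nat.sInf_mem
    refine ⟨n, fun p q h => ?_⟩
    exfalso
    have := p.isLt
    have := q.isLt
    rw [hdist] at h
    omega
  have hD : ∀ r s : Fin n, bandwidth D ≤ Nat.dist (r : ℕ) (s : ℕ) → D r s = 0 := hDmem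
  apply Nat.sInf_le
  intro p q hpq
  rw [Matrix.mul_apply]
  refine Finset.sum_eq_zero fun s _ => ?_
  rw [Matrix.mul_apply, Finset.sum_mul]
  refine Finset.sum_eq_zero fun r _ => ?_
  by_contra hterm
  have hupr : u p r ≠ 0 := fun h => hterm (by simp [h])
  have hDrs : D r s ≠ 0 := fun h => hterm (by simp [h])
  have huqs : u q s ≠ 0 := fun h => hterm (by simp [Matrix.star_apply, h])
  have h1 := hkey p r hupr
  have h2 := hkey q s huqs
  have h3 : ¬ (bandwidth D ≤ Nat.dist (r : ℕ) (s : ℕ)) := fun h => hDrs (hD r s h)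
  rw [hdist] at hpq h3
  omega
end

section
/- Let n ≥ 1 and let 1 ≤ z_1 < z_2 < ⋯ < z_m ≤ n. Then there exists a continuous map W : [0,1] → Mₙ(ℂ) such that W(ξ) is unitary for every ξ ∈ [0,1] and: (a) W(0) = Iₙ; (b) for every T ∈ Mₙ(ℂ) having zero crosses at all of the indices z_1,…,z_m, the matrix W(1)·T·W(1)* has zero crosses at indices 1, 2, …, m, and 𝔯(W(ξ)·T·W(ξ)*) ≤ 𝔯(T) + 2 for every ξ ∈ [0,1]; (c) for every b ≥ 1 and every n×b complex matrix T whose rows z_1,…,z_m consist entirely of zeros, the first m rows of W(1)·T consist entirely of zeros, and for every ξ ∈ [0,1], 𝔯(topRight(W(ξ)·T)) ≤ 𝔯(topRight(T)); (d) for every b ≥ 1 and every b×n complex matrix T whose columns z_1,…,z_m consist entirely of zeros, the first m columns of T·W(1)* consist entirely of zeros, and for every ξ ∈ [0,1], 𝔯(botLeft(T·W(ξ)*)) ≤ 𝔯(botLeft(T)). -/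
/-- The `(n+b) × (n+b)` matrix whose top-right `n × b` block is `S` and whose other
three blocks are zero. -/
def topRight {n b : ℕ} (S : Matrix (Fin n) (Fin b) ℂ) :
    Matrix (Fin (n + b)) (Fin (n + b)) ℂ :=
  Matrix.of fun p q =>
    if h : (p : ℕ) < n ∧ n ≤ (q : ℕ) then
      S ⟨(p : ℕ), h.1⟩ ⟨(q : ℕ) - n, by have := q.2; omega⟩
    else 0

/-- The `(n+b) × (n+b)` matrix whose bottom-left `b × n` block is `S` and whose other
three blocks are zero. -/
def botLeft {n b : ℕ} (S : Matrix (Fin b) (Fin n) ℂ) :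
    Matrix (Fin (n + b)) (Fin (n + b)) ℂ :=
  Matrix.of fun p q =>
    if h : n ≤ (p : ℕ) ∧ (q : ℕ) < n then
      S ⟨(p : ℕ) - n, by have := p.2; omega⟩ ⟨(q : ℕ), h.2⟩
    else 0


/-!
The path `W` is a concatenation of rotations `givens c (c + 1) θ`, `θ` running from `0` to `π / 2`,
which carry the crosses, lowest first, down to the positions `0, …, m - 1` by adjacent steps.
Outside the cross columns each `W(ξ)` is a weighted selection: row `p` is `a p` times the unit
row `g p`. Hence `W T`, `T W*` and `W T W*` are reindexings of `T` scaled by the weights, and all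
bandwidth bounds follow from two inequalities on the live positions (`a p ≠ 0`): `g p ≤ p`, and
`q - p ≤ g q - g p + 1` for `p ≤ q`; the latter even gives `𝔯(W T W*) ≤ 𝔯(T) + 1`. A rotation that
moves the dead row of the current cross from `c + 1` to `c` duplicates row `c` onto row `c + 1`;
it keeps the second inequality because `g` does not shrink gaps below the moving cross nor above it.
-/

open Matrix Real Function Set

section Givens

variable {ι : Type*} [DecidableEq ι]

noncomputable def givens (i j : ι) (θ : ℝ) : Matrix ι ι ℂ :=
  Matrix.of fun p q =>
    if p = i then (if q = i then (cos θ : ℂ) else if q = j then -(sin θ : ℂ) else 0)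
    else if p = j then (if q = i then (sin θ : ℂ) else if q = j then (cos θ : ℂ) else 0)
    else if p = q then 1 else 0

variable {i j : ι}

theorem givens_zero (hij : i ≠ j) : givens i j 0 = 1 := by
  ext p q
  simp only [givens, of_apply, one_apply, cos_zero, sin_zero]
  split_ifs <;> simp_all

theorem continuous_givens (i j : ι) : Continuous (givens i j) := by
  refine continuous_matrix fun p q => ?_
  simp only [givens, of_apply]
  split_ifs <;> fun_prop

variable [Fintype ι]

theorem givens_mul_apply (hij : i ≠ j) (θ : ℝ) {κ : Type*} (W : Matrix ι κ ℂ) (p : ι) (r : κ) :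
    (givens i j θ * W) p r =
      if p = i then cos θ * W i r - sin θ * W j r
      else if p = j then sin θ * W i r + cos θ * W j r
      else W p r := by
  have row : ∀ x y : ℂ, ∑ q, (if q = i then x else if q = j then y else 0) * W q r
      = x * W i r + y * W j r := by
    intro x y
    rw [Fintype.sum_eq_add i j hij] <;> simp [hij.symm]
    intro q hi hj
    simp [hi, hj]
  simp only [givens, mul_apply, of_apply]
  split_ifs
  · rw [row]; ring
  · rw [row]
  · simp [ite_mul, Finset.sum_ite_eq]

theorem givens_mem_unitaryGroup (hij : i ≠ j) (θ : ℝ) : givens i j θ ∈ unitaryGroup ι ℂ := by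
  rw [mem_unitaryGroup_iff]
  ext p q
  rw [givens_mul_apply hij]
  simp only [star_apply, givens, of_apply, one_apply]
  have h : (cos θ : ℂ) * cos θ + sin θ * sin θ = 1 := by
    exact_mod_cast by nlinarith [cos_sq_add_sin_sq θ]
  have hc : star (cos θ : ℂ) = cos θ := Complex.conj_ofReal _
  have hs : star (sin θ : ℂ) = sin θ := Complex.conj_ofReal _
  generalize (cos θ : ℂ) = c at *
  generalize (sin θ : ℂ) = s at *
  split_ifs <;> simp only [hc, hs, star_zero, star_neg, star_one] <;> grind

noncomputable def givensPath (hij : i ≠ j) (W : Matrix ι ι ℂ) :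
    Path W (givens i j (π / 2) * W) where
  toFun t := givens i j (π / 2 * t) * W
  continuous_toFun :=
    ((continuous_givens i j).comp (by fun_prop)).matrix_mul continuous_const
  source' := by simp [givens_zero hij]
  target' := by simp

end Givens

section Selection

variable {ι : Type*} [DecidableEq ι]

def IsSelectionOff (Z : Set ι) (W : Matrix ι ι ℂ) (g : ι → ι) (a : ι → ℝ) : Prop :=
  ∀ p, ∀ i ∉ Z, W p i = if i = g p then (a p : ℂ) else 0

namespace IsSelectionOff

variable {Z : Set ι} {W : Matrix ι ι ℂ} {g : ι → ι} {a : ι → ℝ}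

theorem one : IsSelectionOff Z 1 id 1 := by
  intro p i _
  simp [one_apply, eq_comm]

theorem update_zero (h : IsSelectionOff Z W g a) {p : ι} (hp : g p ∈ Z) :
    IsSelectionOff Z W g (update a p 0) := by
  intro q i hi
  rw [h q i hi, update_apply]
  split_ifs with hiq hqp <;> simp_all

variable [Fintype ι]

theorem mul_apply (h : IsSelectionOff Z W g a) {κ : Type*} {T : Matrix ι κ ℂ}
    (hT : ∀ i ∈ Z, ∀ q, T i q = 0) (p : ι) (q : κ) : (W * T) p q = a p * T (g p) q := by
  calc (W * T) p q = ∑ i, if i = g p then (a p : ℂ) * T i q else 0 := by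
        refine Finset.sum_congr rfl fun i _ => ?_
        by_cases hi : i ∈ Z
        · simp [hT i hi]
        · simp [h p i hi]
    _ = a p * T (g p) q := by simp

theorem mul_star_apply (h : IsSelectionOff Z W g a) {κ : Type*} {T : Matrix κ ι ℂ}
    (hT : ∀ i ∈ Z, ∀ p, T p i = 0) (p : κ) (q : ι) : (T * star W) p q = T p (g q) * a q := by
  have hT' : ∀ i ∈ Z, ∀ p, Tᴴ i p = 0 := fun i hi p => by simp [hT i hi p]
  have := congrArg star (h.mul_apply hT' q p)
  rw [← conjTranspose_apply, conjTranspose_mul, conjTranspose_conjTranspose] at this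
  simpa [mul_comm, star_eq_conjTranspose] using this

theorem conj_apply (h : IsSelectionOff Z W g a) {T : Matrix ι ι ℂ}
    (hrow : ∀ i ∈ Z, ∀ q, T i q = 0) (hcol : ∀ i ∈ Z, ∀ p, T p i = 0) (p q : ι) :
    (W * T * star W) p q = a p * T (g p) (g q) * a q := by
  have hWT : ∀ i ∈ Z, ∀ p, (W * T) p i = 0 := fun i hi p => by
    simp [h.mul_apply hrow, hcol i hi]
  rw [h.mul_star_apply hWT, h.mul_apply hrow]

theorem givens_mul (h : IsSelectionOff Z W g a) {c d : ι} (hcd : c ≠ d) (hd : a d = 0) (θ : ℝ) :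
    IsSelectionOff Z (givens c d θ * W) (update g d (g c))
      (update (update a c (cos θ * a c)) d (sin θ * a c)) := by
  intro p i hi
  rw [givens_mul_apply hcd, h c i hi, h d i hi, h p i hi, hd]
  by_cases hpd : p = d
  · subst hpd
    simp [hcd.symm]
  · by_cases hpc : p = c
    · subst hpc
      simp [hcd]
    · simp [hpc, hpd]

end IsSelectionOff

theorem ne_zero_of_update_update_ne_zero {c d p : ι} (hcd : c ≠ d) {a : ι → ℝ} {x y : ℝ}
    (hp : update (update a c (x * a c)) d (y * a c) p ≠ 0) :
    (p ≠ d ∧ a p ≠ 0) ∨ (p = d ∧ a c ≠ 0) := by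
  by_cases hpd : p = d
  · subst hpd
    rw [update_self] at hp
    exact Or.inr ⟨rfl, right_ne_zero_of_mul hp⟩
  · rw [update_of_ne hpd] at hp
    by_cases hpc : p = c
    · subst hpc
      rw [update_self] at hp
      exact Or.inl ⟨hpd, right_ne_zero_of_mul hp⟩
    · rw [update_of_ne hpc] at hp
      exact Or.inl ⟨hpd, hp⟩

end Selection

section Bandwidth

variable {N : ℕ} {D T : Matrix (Fin N) (Fin N) ℂ}

theorem dist_lt_bandwidth {p q : Fin N} (h : D p q ≠ 0) : Nat.dist p q < bandwidth D := by
  have hmem : bandwidth D ∈ {r : ℕ | ∀ p q : Fin N, r ≤ Nat.dist p q → D p q = 0} :=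
    Nat.sInf_mem ⟨N, fun p q hpq => absurd hpq (by unfold Nat.dist; omega)⟩
  by_contra hle
  exact h (hmem p q (not_lt.mp hle))

theorem bandwidth_le {r : ℕ} (h : ∀ p q, D p q ≠ 0 → Nat.dist p q < r) : bandwidth D ≤ r :=
  Nat.sInf_le fun p q hpq => by_contra fun hD => (h p q hD).not_ge hpq

theorem bandwidth_le_add {r : ℕ}
    (h : ∀ p q, D p q ≠ 0 → ∃ p₀ q₀, T p₀ q₀ ≠ 0 ∧ Nat.dist p q ≤ Nat.dist p₀ q₀ + r) :
    bandwidth D ≤ bandwidth T + r :=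
  bandwidth_le fun p q hD => by
    obtain ⟨p₀, q₀, hT, hdist⟩ := h p q hD
    have := dist_lt_bandwidth hT
    omega

variable {n b : ℕ}

theorem topRight_castAdd_natAdd (S : Matrix (Fin n) (Fin b) ℂ) (p : Fin n) (q : Fin b) :
    topRight S (Fin.castAdd b p) (Fin.natAdd n q) = S p q := by
  simp [topRight]

theorem exists_of_topRight_ne_zero {S : Matrix (Fin n) (Fin b) ℂ} {p q : Fin (n + b)}
    (h : topRight S p q ≠ 0) :
    ∃ p' q', p = Fin.castAdd b p' ∧ q = Fin.natAdd n q' ∧ S p' q' ≠ 0 := by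
  simp only [topRight, of_apply] at h
  split_ifs at h with hpq
  · exact ⟨_, _, Fin.ext rfl, Fin.ext (by simp; omega), h⟩
  · exact absurd rfl h

theorem bandwidth_topRight_le {S S' : Matrix (Fin n) (Fin b) ℂ}
    (h : ∀ p q, S p q ≠ 0 → ∃ p₀ ≤ p, S' p₀ q ≠ 0) :
    bandwidth (topRight S) ≤ bandwidth (topRight S') :=
  bandwidth_le fun p q hS => by
    obtain ⟨p, q, rfl, rfl, hSpq⟩ := exists_of_topRight_ne_zero hS
    obtain ⟨p₀, hp₀, hS'⟩ := h p q hSpq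
    have := dist_lt_bandwidth (D := topRight S') (p := Fin.castAdd b p₀) (q := Fin.natAdd n q)
      (by rwa [topRight_castAdd_natAdd])
    simp only [Fin.val_castAdd, Fin.val_natAdd, Nat.dist, Fin.le_def] at this hp₀ ⊢
    omega

theorem botLeft_natAdd_castAdd (S : Matrix (Fin b) (Fin n) ℂ) (p : Fin b) (q : Fin n) :
    botLeft S (Fin.natAdd n p) (Fin.castAdd b q) = S p q := by
  simp [botLeft]

theorem exists_of_botLeft_ne_zero {S : Matrix (Fin b) (Fin n) ℂ} {p q : Fin (n + b)}
    (h : botLeft S p q ≠ 0) :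
    ∃ p' q', p = Fin.natAdd n p' ∧ q = Fin.castAdd b q' ∧ S p' q' ≠ 0 := by
  simp only [botLeft, of_apply] at h
  split_ifs at h with hpq
  · exact ⟨_, _, Fin.ext (by simp; omega), Fin.ext rfl, h⟩
  · exact absurd rfl h

theorem bandwidth_botLeft_le {S S' : Matrix (Fin b) (Fin n) ℂ}
    (h : ∀ p q, S p q ≠ 0 → ∃ q₀ ≤ q, S' p q₀ ≠ 0) :
    bandwidth (botLeft S) ≤ bandwidth (botLeft S') :=
  bandwidth_le fun p q hS => by
    obtain ⟨p, q, rfl, rfl, hSpq⟩ := exists_of_botLeft_ne_zero hS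
    obtain ⟨q₀, hq₀, hS'⟩ := h p q hSpq
    have := dist_lt_bandwidth (D := botLeft S') (p := Fin.natAdd n p) (q := Fin.castAdd b q₀)
      (by rwa [botLeft_natAdd_castAdd])
    simp only [Fin.val_castAdd, Fin.val_natAdd, Nat.dist, Fin.le_def] at this hq₀ ⊢
    omega

end Bandwidth

section Admissible

variable {n : ℕ}

structure Admissible (Z : Set (Fin n)) (W : Matrix (Fin n) (Fin n) ℂ) (g : Fin n → Fin n)
    (a : Fin n → ℝ) : Prop where
  unitary : W ∈ unitaryGroup (Fin n) ℂ
  isSelectionOff : IsSelectionOff Z W g a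
  le_self : ∀ p, a p ≠ 0 → g p ≤ p
  stretch : ∀ p q, a p ≠ 0 → a q ≠ 0 → p ≤ q → (q : ℕ) + g p ≤ g q + p + 1

namespace Admissible

variable {Z : Set (Fin n)} {W : Matrix (Fin n) (Fin n) ℂ} {g : Fin n → Fin n} {a : Fin n → ℝ}

theorem dist_le (h : Admissible Z W g a) {p q : Fin n} (hp : a p ≠ 0) (hq : a q ≠ 0) :
    Nat.dist p q ≤ Nat.dist (g p) (g q) + 1 := by
  rcases le_total p q with hpq | hqp
  · have := h.stretch p q hp hq hpq
    unfold Nat.dist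
    omega
  · have := h.stretch q p hq hp hqp
    unfold Nat.dist
    omega

theorem bandwidth_conj_le (h : Admissible Z W g a) {T : Matrix (Fin n) (Fin n) ℂ}
    (hrow : ∀ i ∈ Z, ∀ q, T i q = 0) (hcol : ∀ i ∈ Z, ∀ p, T p i = 0) :
    bandwidth (W * T * star W) ≤ bandwidth T + 1 :=
  bandwidth_le_add fun p q hD => by
    rw [h.isSelectionOff.conj_apply hrow hcol] at hD
    have hp : a p ≠ 0 := fun hp => hD (by simp [hp])
    have hq : a q ≠ 0 := fun hq => hD (by simp [hq])
    exact ⟨g p, g q, fun hT => hD (by simp [hT]), h.dist_le hp hq⟩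

theorem bandwidth_topRight_mul_le (h : Admissible Z W g a) {b : ℕ} {T : Matrix (Fin n) (Fin b) ℂ}
    (hT : ∀ i ∈ Z, ∀ q, T i q = 0) : bandwidth (topRight (W * T)) ≤ bandwidth (topRight T) :=
  bandwidth_topRight_le fun p q hWT => by
    rw [h.isSelectionOff.mul_apply hT] at hWT
    have hp : a p ≠ 0 := fun hp => hWT (by simp [hp])
    exact ⟨g p, h.le_self p hp, fun hT => hWT (by simp [hT])⟩

theorem bandwidth_botLeft_mul_star_le (h : Admissible Z W g a) {b : ℕ}
    {T : Matrix (Fin b) (Fin n) ℂ} (hT : ∀ i ∈ Z, ∀ p, T p i = 0) :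
    bandwidth (botLeft (T * star W)) ≤ bandwidth (botLeft T) :=
  bandwidth_botLeft_le fun p q hTW => by
    rw [h.isSelectionOff.mul_star_apply hT] at hTW
    have hq : a q ≠ 0 := fun hq => hTW (by simp [hq])
    exact ⟨g q, h.le_self q hq, fun hT => hTW (by simp [hT])⟩

end Admissible

end Admissible

section Sweep

variable {n m : ℕ} (y : Fin m → Fin n)

-- The crosses `y 0, …, y (k - 1)` have been moved to the rows `0, …, k - 1`; the rows beyond
-- them are untouched.
structure Swept (k : ℕ) (W : Matrix (Fin n) (Fin n) ℂ) (g : Fin n → Fin n) (a : Fin n → ℝ) :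
    Prop where
  unitary : W ∈ unitaryGroup (Fin n) ℂ
  isSelectionOff : IsSelectionOff (range y) W g a
  le_self : ∀ p, a p ≠ 0 → g p ≤ p
  tight : ∀ p q, a p ≠ 0 → a q ≠ 0 → p ≤ q → (q : ℕ) + g p ≤ g q + p
  dead : ∀ p : Fin n, (p : ℕ) < k → a p = 0
  fixed : ∀ p, (∀ j : Fin m, (j : ℕ) < k → y j < p) → g p = p

-- The cross `y j` is on its way from row `y j` down to row `j`; its row is the dead row `c`.
structure Sweeping (j : Fin m) (c : Fin n) (W : Matrix (Fin n) (Fin n) ℂ) (g : Fin n → Fin n)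
    (a : Fin n → ℝ) : Prop extends Admissible (range y) W g a where
  tight_below : ∀ p q, a p ≠ 0 → a q ≠ 0 → p ≤ q → q < c → (q : ℕ) + g p ≤ g q + p
  tight_above : ∀ p q, a p ≠ 0 → a q ≠ 0 → c < p → p ≤ q → (q : ℕ) + g p ≤ g q + p
  dead : ∀ p : Fin n, (p : ℕ) < j → a p = 0
  dead_cross : a c = 0
  le_cross : c ≤ y j
  fixed : ∀ p, y j < p → g p = p

variable {y} {W : Matrix (Fin n) (Fin n) ℂ} {g : Fin n → Fin n} {a : Fin n → ℝ}

theorem swept_zero : Swept y 0 1 id 1 where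
  unitary := one_mem _
  isSelectionOff := IsSelectionOff.one
  le_self _ _ := le_rfl
  tight _ _ _ _ _ := le_rfl
  dead _ h := absurd h (Nat.not_lt_zero _)
  fixed _ _ := rfl

theorem Swept.admissible {k : ℕ} (h : Swept y k W g a) : Admissible (range y) W g a where
  unitary := h.unitary
  isSelectionOff := h.isSelectionOff
  le_self := h.le_self
  stretch p q hp hq hpq := (h.tight p q hp hq hpq).trans (Nat.le_succ _)

theorem Swept.sweeping (hy : StrictMono y) {j : Fin m} (h : Swept y j W g a) :
    Sweeping y j (y j) W g (update a (y j) 0) := by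
  have live : ∀ p, update a (y j) 0 p ≠ 0 → a p ≠ 0 := fun p hp => by
    rw [update_apply] at hp
    split_ifs at hp
    exacts [absurd rfl hp, hp]
  have hfix : g (y j) = y j := h.fixed _ fun i hi => hy hi
  refine
    { unitary := h.unitary
      isSelectionOff := h.isSelectionOff.update_zero (by rw [hfix]; exact mem_range_self j)
      le_self := fun p hp => h.le_self p (live p hp)
      stretch := fun p q hp hq hpq =>
        (h.tight p q (live p hp) (live q hq) hpq).trans (Nat.le_succ _)
      tight_below := fun p q hp hq hpq _ => h.tight p q (live p hp) (live q hq) hpq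
      tight_above := fun p q hp hq _ hpq => h.tight p q (live p hp) (live q hq) hpq
      dead := fun p hp => ?_
      dead_cross := update_self _ _ _
      le_cross := le_rfl
      fixed := fun p hp => h.fixed p fun i hi => (hy hi).trans hp }
  rw [update_apply]
  split_ifs
  exacts [rfl, h.dead p hp]

theorem Sweeping.swept {j : Fin m} {c : Fin n} (h : Sweeping y j c W g a) (hc : (c : ℕ) = j) :
    Swept y (j + 1) W g a where
  unitary := h.unitary
  isSelectionOff := h.isSelectionOff
  le_self := h.le_self
  tight p q hp hq hpq := by
    refine h.tight_above p q hp hq (lt_of_le_of_ne ?_ ?_) hpq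
    · by_contra hlt
      exact hp (h.dead p (by omega))
    · rintro rfl
      exact hp h.dead_cross
  dead p hp := by
    rcases Nat.lt_succ_iff_lt_or_eq.mp hp with hp | hp
    · exact h.dead p hp
    · rw [show p = c from Fin.ext (hp.trans hc.symm)]
      exact h.dead_cross
  fixed p hp := h.fixed p (hp j (Nat.lt_succ_self _))

variable {j : Fin m} {c d : Fin n}

theorem Sweeping.admissible_givens_mul (h : Sweeping y j d W g a) (hcd : (d : ℕ) = c + 1)
    (θ : ℝ) : Admissible (range y) (givens c d θ * W) (update g d (g c))
      (update (update a c (cos θ * a c)) d (sin θ * a c)) := by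
  have hne : c ≠ d := fun e => by rw [e] at hcd; omega
  refine ⟨mul_mem (givens_mem_unitaryGroup hne θ) h.unitary,
    h.isSelectionOff.givens_mul hne h.dead_cross θ, fun p hp => ?_, fun p q hp hq hpq => ?_⟩
  · rcases ne_zero_of_update_update_ne_zero hne hp with ⟨hpd, hpa⟩ | ⟨rfl, hc⟩
    · rw [update_of_ne hpd]
      exact h.le_self p hpa
    · have := h.le_self c hc
      rw [update_self]
      omega
  · rcases ne_zero_of_update_update_ne_zero hne hp with ⟨hpd, hpa⟩ | ⟨rfl, hc⟩ <;>
      rcases ne_zero_of_update_update_ne_zero hne hq with ⟨hqd, hqa⟩ | ⟨rfl, hc'⟩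
    · rw [update_of_ne hpd, update_of_ne hqd]
      exact h.stretch p q hpa hqa hpq
    · have := h.tight_below p c hpa hc' (by omega) (by omega)
      rw [update_of_ne hpd, update_self]
      omega
    · have := h.stretch c q hc hqa (by omega)
      rw [update_of_ne hqd, update_self]
      omega
    · omega

theorem Sweeping.givens_mul (h : Sweeping y j d W g a) (hcd : (d : ℕ) = c + 1)
    (hjc : (j : ℕ) ≤ c) :
    Sweeping y j c (givens c d (π / 2) * W) (update g d (g c))
      (update (update a c (cos (π / 2) * a c)) d (sin (π / 2) * a c)) := by
  have hne : c ≠ d := fun e => by rw [e] at hcd; omega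
  refine { h.admissible_givens_mul hcd (π / 2) with
    tight_below := fun p q hp hq hpq hqc => ?_
    tight_above := fun p q hp hq hcp hpq => ?_
    dead := fun p hp => ?_
    dead_cross := by simp [hne]
    le_cross := (show c ≤ d by omega).trans h.le_cross
    fixed := fun p hp => ?_ }
  · rcases ne_zero_of_update_update_ne_zero hne hp with ⟨hpd, hpa⟩ | ⟨rfl, -⟩ <;>
      rcases ne_zero_of_update_update_ne_zero hne hq with ⟨hqd, hqa⟩ | ⟨rfl, -⟩
    · rw [update_of_ne hpd, update_of_ne hqd]
      exact h.tight_below p q hpa hqa hpq (by omega)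
    all_goals omega
  · rcases ne_zero_of_update_update_ne_zero hne hp with ⟨hpd, hpa⟩ | ⟨rfl, hc⟩ <;>
      rcases ne_zero_of_update_update_ne_zero hne hq with ⟨hqd, hqa⟩ | ⟨rfl, -⟩
    · rw [update_of_ne hpd, update_of_ne hqd]
      exact h.tight_above p q hpa hqa (by omega) hpq
    · omega
    · have := h.stretch c q hc hqa (by omega)
      rw [update_of_ne hqd, update_self]
      omega
    · omega
  · rw [update_of_ne (by omega : p ≠ d), update_of_ne (by omega : p ≠ c)]
    exact h.dead p hp
  · rw [update_of_ne (h.le_cross.trans_lt hp).ne']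
    exact h.fixed p hp

end Sweep

theorem StrictMono.val_le_val_apply {n m : ℕ} {y : Fin m → Fin n} (hy : StrictMono y) (j : Fin m) :
    (j : ℕ) ≤ y j := by
  obtain ⟨j, hj⟩ := j
  induction j with
  | zero => exact Nat.zero_le _
  | succ k ih =>
    have := hy (show (⟨k, by omega⟩ : Fin m) < ⟨k + 1, hj⟩ from Fin.mk_lt_mk.mpr k.lt_succ_self)
    have := ih (by omega)
    simp only [Fin.lt_def] at *
    omega

section Paths

variable {n m : ℕ} {y : Fin m → Fin n}

theorem Sweeping.exists_path_swept {j : Fin m} {c : Fin n} {W : Matrix (Fin n) (Fin n) ℂ}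
    {g : Fin n → Fin n} {a : Fin n → ℝ} (h : Sweeping y j c W g a) (t : ℕ)
    (hc : (c : ℕ) = j + t) :
    ∃ W', ∃ γ : Path W W', range γ ⊆ {V | ∃ g a, Admissible (range y) V g a} ∧
      ∃ g a, Swept y (j + 1) W' g a := by
  induction t generalizing c W g a with
  | zero =>
    refine ⟨W, Path.refl W, ?_, g, a, h.swept hc⟩
    rw [Path.refl_range, singleton_subset_iff]
    exact ⟨g, a, h.toAdmissible⟩
  | succ t ih =>
    set c₀ : Fin n := ⟨j + t, by omega⟩
    have hcc₀ : (c : ℕ) = c₀ + 1 := hc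
    have hne : c₀ ≠ c := fun e => by rw [e] at hcc₀; omega
    obtain ⟨W', γ, hγ, hW'⟩ := ih (h.givens_mul hcc₀ (Nat.le_add_right _ _)) rfl
    refine ⟨W', (givensPath hne W).trans γ, ?_, hW'⟩
    rw [Path.trans_range]
    refine union_subset ?_ hγ
    rintro _ ⟨s, rfl⟩
    exact ⟨_, _, h.admissible_givens_mul hcc₀ _⟩

theorem exists_path_swept (hy : StrictMono y) (k : ℕ) (hk : k ≤ m) :
    ∃ W, ∃ γ : Path 1 W, range γ ⊆ {V | ∃ g a, Admissible (range y) V g a} ∧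
      ∃ g a, Swept y k W g a := by
  induction k with
  | zero =>
    refine ⟨1, Path.refl 1, ?_, id, 1, swept_zero⟩
    rw [Path.refl_range, singleton_subset_iff]
    exact ⟨id, 1, swept_zero.admissible⟩
  | succ k ih =>
    obtain ⟨W, γ, hγ, g, a, hW⟩ := ih (by omega)
    set j : Fin m := ⟨k, by omega⟩
    obtain ⟨W', γ', hγ', hW'⟩ := (hW.sweeping (j := j) hy).exists_path_swept (y j - j)
      (by have := hy.val_le_val_apply j; omega)
    exact ⟨W', γ.trans γ', by rw [Path.trans_range]; exact union_subset hγ hγ', hW'⟩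

end Paths

theorem stmt_12 (n : ℕ) (m : ℕ) (z : Fin m → ℕ)
    (hz : StrictMono z) (hz1 : ∀ k, 1 ≤ z k) (hzn : ∀ k, z k ≤ n) :
    ∃ W : C(Set.Icc (0 : ℝ) 1, Matrix (Fin n) (Fin n) ℂ),
      (∀ ξ, W ξ ∈ Matrix.unitaryGroup (Fin n) ℂ) ∧
      W ⟨0, by norm_num⟩ = 1 ∧
      (∀ T : Matrix (Fin n) (Fin n) ℂ,
        (∀ k : Fin m, hasZeroCross T ⟨z k - 1, by have := hz1 k; have := hzn k; omega⟩) →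
          ((∀ r : Fin n, (r : ℕ) < m →
              hasZeroCross (W ⟨1, by norm_num⟩ * T * star (W ⟨1, by norm_num⟩)) r) ∧
           (∀ ξ, bandwidth (W ξ * T * star (W ξ)) ≤ bandwidth T + 2))) ∧
      (∀ b : ℕ, 1 ≤ b → ∀ T : Matrix (Fin n) (Fin b) ℂ,
        (∀ (k : Fin m) (q : Fin b),
            T ⟨z k - 1, by have := hz1 k; have := hzn k; omega⟩ q = 0) →
          ((∀ (p : Fin n) (q : Fin b), (p : ℕ) < m → (W ⟨1, by norm_num⟩ * T) p q = 0) ∧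
           (∀ ξ, bandwidth (topRight (W ξ * T)) ≤ bandwidth (topRight T)))) ∧
      (∀ b : ℕ, 1 ≤ b → ∀ T : Matrix (Fin b) (Fin n) ℂ,
        (∀ (k : Fin m) (p : Fin b),
            T p ⟨z k - 1, by have := hz1 k; have := hzn k; omega⟩ = 0) →
          ((∀ (p : Fin b) (q : Fin n), (q : ℕ) < m →
              (T * star (W ⟨1, by norm_num⟩)) p q = 0) ∧
           (∀ ξ, bandwidth (botLeft (T * star (W ξ))) ≤ bandwidth (botLeft T)))) := by
  set y : Fin m → Fin n := fun k => ⟨z k - 1, by have := hz1 k; have := hzn k; omega⟩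
  have hy : StrictMono y := fun i j hij => Fin.lt_def.mpr <| by
    have := hz hij
    have := hz1 i
    dsimp only [y]
    omega
  obtain ⟨W, γ, hγ, g, a, hW⟩ := exists_path_swept hy m le_rfl
  choose gξ aξ adm using fun ξ => hγ (mem_range_self ξ)
  have hsel := hW.isSelectionOff
  refine ⟨γ.toContinuousMap, fun ξ => (adm ξ).unitary, γ.source, fun T hT => ?_,
    fun b _ T hT => ?_, fun b _ T hT => ?_⟩
  · have hrow : ∀ i ∈ range y, ∀ q, T i q = 0 := by rintro _ ⟨k, rfl⟩; exact (hT k).1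
    have hcol : ∀ i ∈ range y, ∀ p, T p i = 0 := by rintro _ ⟨k, rfl⟩; exact (hT k).2
    refine ⟨fun r hr => ?_, fun ξ => ((adm ξ).bandwidth_conj_le hrow hcol).trans (by omega)⟩
    change hasZeroCross (γ 1 * T * star (γ 1)) r
    rw [γ.target]
    exact ⟨fun q => by simp [hsel.conj_apply hrow hcol, hW.dead r hr],
      fun p => by simp [hsel.conj_apply hrow hcol, hW.dead r hr]⟩
  · have hrow : ∀ i ∈ range y, ∀ q, T i q = 0 := by rintro _ ⟨k, rfl⟩; exact hT k
    refine ⟨fun p q hp => ?_, fun ξ => (adm ξ).bandwidth_topRight_mul_le hrow⟩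
    change (γ 1 * T) p q = 0
    simp [γ.target, hsel.mul_apply hrow, hW.dead p hp]
  · have hcol : ∀ i ∈ range y, ∀ p, T p i = 0 := by rintro _ ⟨k, rfl⟩; exact hT k
    refine ⟨fun p q hq => ?_, fun ξ => (adm ξ).bandwidth_botLeft_mul_star_le hcol⟩
    change (T * star (γ 1)) p q = 0
    simp [γ.target, hsel.mul_star_apply hcol, hW.dead q hq]
end

section
/- Let N ≥ 1, let n ≥ 1, and let c : [0,1] → M₂(ℂ) satisfy c(0) = I₂, c(1) = the 2×2 swap matrix [[0,1],[1,0]], and c(θ) unitary for every θ. Suppose k, i, n ∈ ℕ satisfy N ≤ k ≤ i − N and i ≤ n − N, and let ξ ∈ [0,1]. Then uⁿ_{k,n}(ξ) = U[σⁿ_{i,n}] · uⁿ_{k,i}(ξ) · U[σⁿ_{i,n}]. -/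
/-- Given a path `c : [0,1] → M₂(ℂ)`, the matrix `u_{(i j)}(θ) ∈ Mₙ(ℂ)` agreeing with
the identity except that its `(i,i)`, `(i,j)`, `(j,i)`, `(j,j)` entries are the entries
of `c θ`.  (For `i = j` it is the identity matrix `Iₙ`.) -/
def uSwap {n : ℕ} (c : ℝ → Matrix (Fin 2) (Fin 2) ℂ) (i j : Fin n) (θ : ℝ) :
    Matrix (Fin n) (Fin n) ℂ :=
  if i = j then 1 else
    Matrix.of fun p q =>
      if p = i ∧ q = i then c θ 0 0
      else if p = i ∧ q = j then c θ 0 1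
      else if p = j ∧ q = i then c θ 1 0
      else if p = j ∧ q = j then c θ 1 1
      else if p = q then 1 else 0

/-- `uⁿ_{j,k}(θ) := u_{(j-N+1, k-N+1)}(θ) · u_{(j-N+2, k-N+2)}(θ) ⋯ u_{(j,k)}(θ)`
(`N` factors, in this order; all indices 1-based). -/
noncomputable def uNN (n N : ℕ) (c : ℝ → Matrix (Fin 2) (Fin 2) ℂ) (j k : ℕ)
    (hN : 1 ≤ N) (hj : N ≤ j) (hjk : j ≤ k) (hk : k ≤ n) (θ : ℝ) :
    Matrix (Fin n) (Fin n) ℂ :=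
  (List.ofFn fun s : Fin N =>
    uSwap c (⟨j - N + (s : ℕ), by have := s.2; omega⟩ : Fin n)
      (⟨k - N + (s : ℕ), by have := s.2; omega⟩ : Fin n) θ).prod

/-- `σⁿ_{j,k} := (j-N+1 k-N+1)(j-N+2 k-N+2)⋯(j k)`, a product of `N` transpositions
of `{1,…,n}` (1-based indices). -/
def sigmaNN (n N j k : ℕ) (hN : 1 ≤ N) (hj : N ≤ j) (hjk : j ≤ k) (hk : k ≤ n) :
    Equiv.Perm (Fin n) :=
  (List.ofFn fun s : Fin N =>
    Equiv.swap (⟨j - N + (s : ℕ), by have := s.2; omega⟩ : Fin n)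
      (⟨k - N + (s : ℕ), by have := s.2; omega⟩ : Fin n)).prod

/-! `σⁿ_{i,n}` is a product of disjoint transpositions exchanging the blocks `i-N+1, …, i` and
`n-N+1, …, n`, hence an involution, so conjugating by `U[σⁿ_{i,n}]` just relabels rows and
columns by `σⁿ_{i,n}`. This relabelling is multiplicative, and it sends each factor
`u_{(k-N+s, i-N+s)}` of `uⁿ_{k,i}` to `u_{(k-N+s, n-N+s)}`, because `k ≤ i - N` puts the
indices `k-N+s` below both blocks. -/

open Equiv Matrix Function

lemma permMat_eq_permMatrix_inv {n : ℕ} (π : Perm (Fin n)) : permMat π = π⁻¹.permMatrix ℂ := by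
  ext p q
  simp [permMat, PEquiv.toMatrix_apply, Equiv.eq_symm_apply, eq_comm]

lemma permMat_mul_mul_permMat {n : ℕ} (π : Perm (Fin n)) (A : Matrix (Fin n) (Fin n) ℂ) :
    permMat π * A * permMat π = A.submatrix ⇑π⁻¹ π := by
  rw [permMat_eq_permMatrix_inv, PEquiv.toMatrix_toPEquiv_mul, PEquiv.mul_toMatrix_toPEquiv,
    submatrix_submatrix]
  rfl

lemma submatrix_list_prod {m α : Type*} [Fintype m] [DecidableEq m] [Semiring α] (σ : Perm m)
    (l : List (Matrix m m α)) : l.prod.submatrix σ σ = (l.map (·.submatrix σ σ)).prod := by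
  induction l with
  | nil => simp
  | cons A l ih => simp [← ih, submatrix_mul_equiv]

lemma uSwap_submatrix {n : ℕ} (c : ℝ → Matrix (Fin 2) (Fin 2) ℂ) (x y : Fin n) (θ : ℝ)
    (σ : Perm (Fin n)) : (uSwap c x y θ).submatrix σ σ = uSwap c (σ⁻¹ x) (σ⁻¹ y) θ := by
  by_cases hxy : x = y
  · subst hxy
    simp [uSwap]
  · ext p q
    simp [uSwap, hxy, ← Perm.eq_inv_iff_eq]

namespace Equiv.Perm

variable {α : Type*} [DecidableEq α]

lemma prod_ofFn_swap_apply_of_forall_ne {N : ℕ} {f g : Fin N → α} {x : α}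
    (hf : ∀ s, f s ≠ x) (hg : ∀ s, g s ≠ x) :
    (List.ofFn fun s => swap (f s) (g s)).prod x = x := by
  induction N with
  | zero => simp
  | succ N ih =>
    rw [List.ofFn_succ, List.prod_cons, mul_apply, ih (fun s => hf s.succ) (fun s => hg s.succ),
      swap_apply_of_ne_of_ne (hf 0).symm (hg 0).symm]

lemma prod_ofFn_swap_apply_left {N : ℕ} {f g : Fin N → α} (hf : Injective f) (hg : Injective g)
    (hfg : ∀ s t, f s ≠ g t) (s : Fin N) :
    (List.ofFn fun s => swap (f s) (g s)).prod (f s) = g s := by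
  induction N with
  | zero => exact s.elim0
  | succ N ih =>
    rw [List.ofFn_succ, List.prod_cons, mul_apply]
    cases s using Fin.cases with
    | zero =>
      rw [prod_ofFn_swap_apply_of_forall_ne (fun t => hf.ne (Fin.succ_ne_zero t))
        (fun t => (hfg 0 t.succ).symm), swap_apply_left]
    | succ t =>
      rw [ih (f := fun s => f s.succ) (g := fun s => g s.succ) (hf.comp (Fin.succ_injective _))
        (hg.comp (Fin.succ_injective _)) (fun s t => hfg s.succ t.succ) t]
      exact swap_apply_of_ne_of_ne (hfg 0 t.succ).symm (hg.ne (Fin.succ_ne_zero t))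

lemma prod_ofFn_swap_apply_right {N : ℕ} {f g : Fin N → α} (hf : Injective f)
    (hg : Injective g) (hfg : ∀ s t, f s ≠ g t) (s : Fin N) :
    (List.ofFn fun s => swap (f s) (g s)).prod (g s) = f s := by
  simp_rw [swap_comm (f _)]
  exact prod_ofFn_swap_apply_left hg hf (fun s t => (hfg t s).symm) s

lemma prod_ofFn_swap_mul_self {N : ℕ} {f g : Fin N → α} (hf : Injective f) (hg : Injective g)
    (hfg : ∀ s t, f s ≠ g t) :
    (List.ofFn fun s => swap (f s) (g s)).prod * (List.ofFn fun s => swap (f s) (g s)).prod = 1 := by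
  ext x
  rw [mul_apply, one_apply]
  by_cases hxf : ∃ s, f s = x
  · obtain ⟨s, rfl⟩ := hxf
    rw [prod_ofFn_swap_apply_left hf hg hfg, prod_ofFn_swap_apply_right hf hg hfg]
  by_cases hxg : ∃ s, g s = x
  · obtain ⟨s, rfl⟩ := hxg
    rw [prod_ofFn_swap_apply_right hf hg hfg, prod_ofFn_swap_apply_left hf hg hfg]
  push Not at hxf hxg
  rw [prod_ofFn_swap_apply_of_forall_ne hxf hxg, prod_ofFn_swap_apply_of_forall_ne hxf hxg]

end Equiv.Perm

lemma injective_fin_mk_sub_add {n N j : ℕ} (hj : N ≤ j) (hjn : j ≤ n) :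
    Injective fun s : Fin N => (⟨j - N + s, by omega⟩ : Fin n) := by
  intro s t h
  simp only [Fin.mk.injEq] at h
  exact Fin.ext (by omega)

section sigmaNN

variable {n N j k : ℕ} (hN : 1 ≤ N) (hj : N ≤ j) (hjk : j ≤ k) (hk : k ≤ n)

lemma sigmaNN_mul_self (hdisj : j + N ≤ k) :
    sigmaNN n N j k hN hj hjk hk * sigmaNN n N j k hN hj hjk hk = 1 :=
  Perm.prod_ofFn_swap_mul_self (injective_fin_mk_sub_add hj (by omega))
    (injective_fin_mk_sub_add (by omega) hk) (fun s t h => by simp only [Fin.mk.injEq] at h; omega)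

lemma sigmaNN_apply_left (hdisj : j + N ≤ k) (s : Fin N) :
    sigmaNN n N j k hN hj hjk hk ⟨j - N + s, by omega⟩ = ⟨k - N + s, by omega⟩ :=
  Perm.prod_ofFn_swap_apply_left (injective_fin_mk_sub_add hj (by omega))
    (injective_fin_mk_sub_add (by omega) hk)
    (fun s t h => by simp only [Fin.mk.injEq] at h; omega) s

lemma sigmaNN_apply_of_lt (x : Fin n) (hx : (x : ℕ) < j - N) :
    sigmaNN n N j k hN hj hjk hk x = x :=
  Perm.prod_ofFn_swap_apply_of_forall_ne (fun s h => by subst h; simp only at hx; omega)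
    (fun s h => by subst h; simp only at hx; omega)

end sigmaNN

theorem stmt_13 (N n k i : ℕ) (hN : 1 ≤ N)
    (c : ℝ → Matrix (Fin 2) (Fin 2) ℂ)
    (hk : N ≤ k) (hki : k ≤ i - N) (hin : i ≤ n - N)
    (ξ : ℝ) :
    uNN n N c k n hN hk (by omega) le_rfl ξ =
      permMat (sigmaNN n N i n hN (by omega) (by omega) le_rfl) *
        uNN n N c k i hN hk (by omega) (by omega) ξ *
        permMat (sigmaNN n N i n hN (by omega) (by omega) le_rfl) := by
  have hdisj : i + N ≤ n := by omega
  have hinv := inv_eq_of_mul_eq_one_right (sigmaNN_mul_self hN (by omega) (by omega) le_rfl hdisj)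
  rw [permMat_mul_mul_permMat, hinv, uNN, uNN, submatrix_list_prod, List.map_ofFn]
  refine congrArg List.prod (congrArg List.ofFn (funext fun s => ?_))
  rw [Function.comp_apply, uSwap_submatrix, hinv,
    sigmaNN_apply_of_lt _ _ _ _ _ (by simp only; omega), sigmaNN_apply_left _ _ _ _ hdisj]
end

section
/- Let T be a set, h : T → T a map, and R ⊆ S ⊆ T subsets. Suppose x ∈ R and that there exists n ≥ 1 with hⁿ(x) ∈ R, so that the first return time λ_R(x) is defined. Then there exist q ≥ 1 and natural numbers 0 = β₀ < β₁ < ⋯ < β_q = λ_R(x) such that: (i) for every 1 ≤ k ≤ λ_R(x), h^k(x) ∈ S if and only if k = β_j for some 1 ≤ j ≤ q; and (ii) for every 1 ≤ j ≤ q, the point h^{β_{j−1}}(x) lies in S, its first return time λ_S(h^{β_{j−1}}(x)) is defined, and β_j − β_{j−1} = λ_S(h^{β_{j−1}}(x)). -/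
/-- The first return time `λ_A(z) := min {n ≥ 1 : hⁿ(z) ∈ A}` of a point `z` to a
set `A` under iteration of `h`. -/
noncomputable def firstReturn {T : Type} (h : T → T) (A : Set T) (z : T) : ℕ :=
  sInf {n : ℕ | 1 ≤ n ∧ h^[n] z ∈ A}

/-!
The times `β j` are the successive visits of the orbit of `x` to `S`, each obtained from the
previous one by adding the first return time to `S`. Since `h^L x ∈ S` for `L = λ_R(x)`, no
step can jump past `L`, and the steps are positive before `L` is reached; so the sequence hits
`L` exactly, and by minimality of each return time it skips no visit to `S` on the way.
-/

variable {T : Type} {h : T → T}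

theorem iterate_sub_apply_iterate {b n : ℕ} (hbn : b ≤ n) (x : T) :
    h^[n - b] (h^[b] x) = h^[n] x := by
  rw [← Function.iterate_add_apply, Nat.sub_add_cancel hbn]

section FirstReturn

variable {A : Set T} {z : T} {n : ℕ}

theorem firstReturn_spec (hn : 1 ≤ n) (hnA : h^[n] z ∈ A) :
    1 ≤ firstReturn h A z ∧ h^[firstReturn h A z] z ∈ A :=
  Nat.sInf_mem (s := {n | 1 ≤ n ∧ h^[n] z ∈ A}) ⟨n, hn, hnA⟩

theorem firstReturn_le (hn : 1 ≤ n) (hnA : h^[n] z ∈ A) : firstReturn h A z ≤ n :=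
  Nat.sInf_le ⟨hn, hnA⟩

theorem firstReturn_iterate_spec {b : ℕ} (hbn : b < n) (hnA : h^[n] z ∈ A) :
    1 ≤ firstReturn h A (h^[b] z) ∧ b + firstReturn h A (h^[b] z) ≤ n ∧
      h^[b + firstReturn h A (h^[b] z)] z ∈ A := by
  have hpos : 1 ≤ n - b := by omega
  have hmem : h^[n - b] (h^[b] z) ∈ A := by rwa [iterate_sub_apply_iterate hbn.le]
  obtain ⟨hret, hretA⟩ := firstReturn_spec hpos hmem
  refine ⟨hret, by have := firstReturn_le hpos hmem; omega, ?_⟩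
  rwa [Nat.add_comm, Function.iterate_add_apply]

end FirstReturn

noncomputable def returnTimes (h : T → T) (S : Set T) (x : T) : ℕ → ℕ
  | 0 => 0
  | j + 1 => returnTimes h S x j + firstReturn h S (h^[returnTimes h S x j] x)

noncomputable def returnCount (h : T → T) (S : Set T) (x : T) (L : ℕ) : ℕ :=
  sInf {j | L ≤ returnTimes h S x j}

section ReturnTimes

variable {S : Set T} {x : T} {L j : ℕ}

theorem returnTimes_succ_sub (j : ℕ) :
    returnTimes h S x (j + 1) - returnTimes h S x j = firstReturn h S (h^[returnTimes h S x j] x) :=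
  Nat.add_sub_cancel_left ..

theorem returnTimes_mono : Monotone (returnTimes h S x) :=
  monotone_nat_of_le_succ fun _ => Nat.le_add_right _ _

theorem returnTimes_succ_spec (hL : h^[L] x ∈ S) (hj : returnTimes h S x j < L) :
    returnTimes h S x j < returnTimes h S x (j + 1) ∧ returnTimes h S x (j + 1) ≤ L ∧
      h^[returnTimes h S x (j + 1)] x ∈ S := by
  obtain ⟨hpos, hle, hmem⟩ := firstReturn_iterate_spec hj hL
  exact ⟨by simp only [returnTimes]; omega, hle, hmem⟩

theorem le_returnTimes_of_lt (hL : h^[L] x ∈ S) (hj : returnTimes h S x j < L) :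
    j ≤ returnTimes h S x j := by
  induction j with
  | zero => exact le_rfl
  | succ j ih =>
    have hprev : returnTimes h S x j < L := (returnTimes_mono (Nat.le_succ j)).trans_lt hj
    have := (returnTimes_succ_spec hL hprev).1
    have := ih hprev
    omega

theorem le_returnTimes_returnCount (hL : h^[L] x ∈ S) :
    L ≤ returnTimes h S x (returnCount h S x L) := by
  refine Nat.sInf_mem (s := {j | L ≤ returnTimes h S x j}) ⟨L, ?_⟩
  by_contra hlt
  exact hlt (le_returnTimes_of_lt hL (not_le.mp hlt))

theorem returnTimes_lt_of_lt_returnCount (hj : j < returnCount h S x L) :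
    returnTimes h S x j < L :=
  not_le.mp (Nat.notMem_of_lt_sInf (s := {j | L ≤ returnTimes h S x j}) hj)

theorem one_le_returnCount (hL : h^[L] x ∈ S) (hL1 : 1 ≤ L) : 1 ≤ returnCount h S x L := by
  by_contra h0
  have hreach := le_returnTimes_returnCount hL
  rw [show returnCount h S x L = 0 by omega, returnTimes] at hreach
  omega

theorem returnTimes_returnCount (hL : h^[L] x ∈ S) (hL1 : 1 ≤ L) :
    returnTimes h S x (returnCount h S x L) = L := by
  obtain ⟨i, hi⟩ := Nat.exists_eq_add_of_le' (one_le_returnCount hL hL1)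
  have hprev := returnTimes_lt_of_lt_returnCount (show i < returnCount h S x L by omega)
  have hle := (returnTimes_succ_spec hL hprev).2.1
  have hge := le_returnTimes_returnCount hL
  rw [hi] at hge ⊢
  omega

theorem iterate_returnTimes_mem (hx : x ∈ S) (hL : h^[L] x ∈ S)
    (hj : j ≤ returnCount h S x L) :
    h^[returnTimes h S x j] x ∈ S := by
  cases j with
  | zero => exact hx
  | succ i => exact (returnTimes_succ_spec hL (returnTimes_lt_of_lt_returnCount hj)).2.2

theorem iterate_mem_iff_exists_returnTimes (hx : x ∈ S) (hL : h^[L] x ∈ S) (hL1 : 1 ≤ L)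
    {k : ℕ} (hk1 : 1 ≤ k) (hkL : k ≤ L) :
    h^[k] x ∈ S ↔ ∃ j, 1 ≤ j ∧ j ≤ returnCount h S x L ∧ k = returnTimes h S x j := by
  constructor
  · intro hkS
    -- Take the first visit time `β (i + 1) ≥ k`; as `β i < k`, minimality of the return
    -- from `β i` gives `β (i + 1) ≤ k`.
    set visits := {j | k ≤ returnTimes h S x j}
    have hq : returnCount h S x L ∈ visits := by
      rw [Set.mem_ofPred_eq, returnTimes_returnCount hL hL1]; exact hkL
    have hjq : sInf visits ≤ returnCount h S x L := Nat.sInf_le hq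
    have hkj : sInf visits ∈ visits := Nat.sInf_mem ⟨_, hq⟩
    obtain ⟨i, hi⟩ : ∃ i, sInf visits = i + 1 := Nat.exists_eq_succ_of_ne_zero fun h0 => by
      rw [h0] at hkj; simp only [visits, Set.mem_ofPred_eq, returnTimes] at hkj; omega
    have hik : i ∉ visits := Nat.notMem_of_lt_sInf (by omega)
    simp only [visits, Set.mem_ofPred_eq, not_le] at hik
    rw [hi] at hjq hkj
    simp only [visits, Set.mem_ofPred_eq] at hkj
    have hstep : firstReturn h S (h^[returnTimes h S x i] x) ≤ k - returnTimes h S x i :=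
      firstReturn_le (by omega) (by rwa [iterate_sub_apply_iterate hik.le])
    refine ⟨i + 1, Nat.le_add_left 1 i, hjq, ?_⟩
    simp only [returnTimes] at hkj ⊢
    omega
  · rintro ⟨j, -, hjq, rfl⟩
    exact iterate_returnTimes_mem hx hL hjq

end ReturnTimes

theorem stmt_16 {T : Type} (h : T → T) (R S : Set T) (hRS : R ⊆ S)
    (x : T) (hx : x ∈ R) (hret : ∃ n, 1 ≤ n ∧ h^[n] x ∈ R) :
    ∃ (q : ℕ) (β : ℕ → ℕ), 1 ≤ q ∧ β 0 = 0 ∧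
      (∀ j, j < q → β j < β (j + 1)) ∧
      β q = firstReturn h R x ∧
      (∀ kk, 1 ≤ kk → kk ≤ firstReturn h R x →
        (h^[kk] x ∈ S ↔ ∃ j, 1 ≤ j ∧ j ≤ q ∧ kk = β j)) ∧
      (∀ j, 1 ≤ j → j ≤ q →
        h^[β (j - 1)] x ∈ S ∧
        (∃ n, 1 ≤ n ∧ h^[n] (h^[β (j - 1)] x) ∈ S) ∧
        β j - β (j - 1) = firstReturn h S (h^[β (j - 1)] x)) := by
  obtain ⟨n, hn1, hnR⟩ := hret
  obtain ⟨hL1, hLR⟩ := firstReturn_spec hn1 hnR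
  have hLS := hRS hLR
  have hxS := hRS hx
  refine ⟨returnCount h S x (firstReturn h R x), returnTimes h S x,
    one_le_returnCount hLS hL1, rfl,
    fun j hj => (returnTimes_succ_spec hLS (returnTimes_lt_of_lt_returnCount hj)).1,
    returnTimes_returnCount hLS hL1,
    fun k hk1 hkL => iterate_mem_iff_exists_returnTimes hxS hLS hL1 hk1 hkL, ?_⟩
  rintro j hj1 hjq
  obtain ⟨i, rfl⟩ := Nat.exists_eq_add_of_le' hj1
  have hlt := returnTimes_lt_of_lt_returnCount hjq
  refine ⟨iterate_returnTimes_mem hxS hLS (Nat.le_of_succ_le hjq),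
    ⟨firstReturn h R x - returnTimes h S x i, by omega, ?_⟩, returnTimes_succ_sub i⟩
  rwa [Nat.add_sub_cancel, iterate_sub_apply_iterate hlt.le]
end
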